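/- arXiv:math/0408282 — 7 statements merged into one kernel-verified Lean document; each statement's English description precedes it below -/
import Mathlib

section
/- Combinatorial completeness: every true combinatorial proposition has a combinatorial proof. -/
/- Combinatorial proofs (Hughes, "Proofs Without Syntax"): common definitions. -/

namespace CombinatorialProofs

/-- An atom: a literal (a variable `p` or its negation `p̄`) or a constant (`1` or `0`). -/
inductive Atom (ν : Type) : Type where
  | pos : ν → Atom ν
  | neg : ν → Atom ν
  | tru : Atom ν
  | fls : Atom ν

/-- The dual of an atom. -/
def Atom.dual {ν : Type} : Atom ν → Atom ν
  | .pos p => .neg p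
  | .neg p => .pos p
  | .tru   => .fls
  | .fls   => .tru

/-- Two atoms are dual literals. -/
def DualLiterals {ν : Type} (a b : Atom ν) : Prop :=
  ∃ p : ν, (a = .pos p ∧ b = .neg p) ∨ (a = .neg p ∧ b = .pos p)

/-- An `𝒜`-labelled graph: a simple graph together with an atom labelling each vertex. -/
structure LabGraph (ν : Type) : Type 1 where
  V : Type
  G : SimpleGraph V
  label : V → Atom ν

/-- The disjoint union `G₁ ∨ G₂` of two graphs (on the sum of the vertex types). -/
def sumUnion {V₁ V₂ : Type} (G₁ : SimpleGraph V₁) (G₂ : SimpleGraph V₂) :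
    SimpleGraph (V₁ ⊕ V₂) where
  Adj v w :=
    match v, w with
    | .inl a, .inl b => G₁.Adj a b
    | .inr a, .inr b => G₂.Adj a b
    | _, _ => False
  symm := ⟨by rintro (a | a) (b | b) h <;> first | exact h.symm | exact h.elim⟩
  loopless := ⟨by rintro (a | a) h <;> exact SimpleGraph.irrefl _ h⟩

/-- The join `G₁ ∧ G₂` of two graphs: disjoint union plus all edges in between. -/
def sumJoin {V₁ V₂ : Type} (G₁ : SimpleGraph V₁) (G₂ : SimpleGraph V₂) :
    SimpleGraph (V₁ ⊕ V₂) where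
  Adj v w :=
    match v, w with
    | .inl a, .inl b => G₁.Adj a b
    | .inr a, .inr b => G₂.Adj a b
    | _, _ => True
  symm := ⟨by rintro (a | a) (b | b) h <;> first | exact h.symm | trivial⟩
  loopless := ⟨by rintro (a | a) h <;> exact SimpleGraph.irrefl _ h⟩

/-- `¬G`: complement the edge set and dualise every label. -/
def LabGraph.neg {ν : Type} (A : LabGraph ν) : LabGraph ν :=
  ⟨A.V, A.Gᶜ, fun v => (A.label v).dual⟩

/-- Union of labelled graphs. -/
def LabGraph.union {ν : Type} (A B : LabGraph ν) : LabGraph ν :=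
  ⟨A.V ⊕ B.V, sumUnion A.G B.G, Sum.elim A.label B.label⟩

/-- Join of labelled graphs. -/
def LabGraph.join {ν : Type} (A B : LabGraph ν) : LabGraph ν :=
  ⟨A.V ⊕ B.V, sumJoin A.G B.G, Sum.elim A.label B.label⟩

/-- A single vertex labelled by the atom `a`. -/
def LabGraph.ofAtom {ν : Type} (a : Atom ν) : LabGraph ν :=
  ⟨PUnit, ⊥, fun _ => a⟩

/-- Propositions, generated freely from variables by `∧`, `∨`, `⇒`, `¬`, `1`, `0`. -/
inductive Form (ν : Type) : Type where
  | var : ν → Form ν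
  | tru : Form ν
  | fls : Form ν
  | not : Form ν → Form ν
  | and : Form ν → Form ν → Form ν
  | or  : Form ν → Form ν → Form ν
  | imp : Form ν → Form ν → Form ν

/-- The boolean value of a proposition under a valuation, with
`f̂(φ ⇒ ρ) = f̂((¬φ) ∨ ρ)`. -/
def Form.eval {ν : Type} (f : ν → Bool) : Form ν → Bool
  | .var p   => f p
  | .tru     => true
  | .fls     => false
  | .not φ   => !(φ.eval f)
  | .and φ ρ => φ.eval f && ρ.eval f
  | .or φ ρ  => φ.eval f || ρ.eval f
  | .imp φ ρ => !(φ.eval f) || ρ.eval f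

/-- A proposition is true if it evaluates to `1` under every valuation. -/
def Form.Valid {ν : Type} (φ : Form ν) : Prop :=
  ∀ f : ν → Bool, φ.eval f = true

/-- The labelled graph `G(φ)` of a proposition `φ`, with `∨` as union, `∧` as join,
`¬` as the labelled-graph negation, and `G ⇒ G' = (¬G) ∨ G'`. -/
def Form.graph {ν : Type} : Form ν → LabGraph ν
  | .var p   => .ofAtom (.pos p)
  | .tru     => .ofAtom .tru
  | .fls     => .ofAtom .fls
  | .not φ   => φ.graph.neg
  | .and φ ρ => φ.graph.join ρ.graph
  | .or φ ρ  => φ.graph.union ρ.graph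
  | .imp φ ρ => φ.graph.neg.union ρ.graph

/-- A set of vertices is stable if no two of its elements are joined by an edge. -/
def IsStable {V : Type} (G : SimpleGraph V) (W : Set V) : Prop :=
  ∀ v ∈ W, ∀ w ∈ W, ¬ G.Adj v w

/-- A clause of the subgraph of `G` induced by `S`: a subset of `S` that is stable and
maximal among stable subsets of `S`. -/
def IsClauseOn {V : Type} (G : SimpleGraph V) (S W : Set V) : Prop :=
  W ⊆ S ∧ IsStable G W ∧ ∀ W' : Set V, W' ⊆ S → IsStable G W' → W ⊆ W' → W' = W

/-- A clause: a maximal stable set. -/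
def IsClause {V : Type} (G : SimpleGraph V) (W : Set V) : Prop :=
  IsClauseOn G Set.univ W

/-- A clause (set of vertices) of an `𝒜`-labelled graph is true if it contains a
`1`-labelled vertex or two vertices labelled by dual literals. -/
def ClauseTrue {ν V : Type} (label : V → Atom ν) (W : Set V) : Prop :=
  (∃ v ∈ W, label v = Atom.tru) ∨
  (∃ v ∈ W, ∃ w ∈ W, DualLiterals (label v) (label w))

/-- An `𝒜`-labelled graph is true if all of its clauses are true. -/
def LabGraph.IsTrue {ν : Type} (A : LabGraph ν) : Prop :=
  ∀ W : Set A.V, IsClause A.G W → ClauseTrue A.label W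

/-- A cograph: a non-empty graph with no induced path on four vertices. -/
def IsCograph {V : Type} (G : SimpleGraph V) : Prop :=
  Nonempty V ∧
  ∀ v w x y : V, v ≠ w → v ≠ x → v ≠ y → w ≠ x → w ≠ y → x ≠ y →
    ¬ (G.Adj v w ∧ G.Adj w x ∧ G.Adj x y ∧ ¬ G.Adj v x ∧ ¬ G.Adj w y ∧ ¬ G.Adj v y)

/-- A graph homomorphism: a function on vertices preserving adjacency. -/
def IsGraphHom {V V' : Type} (G : SimpleGraph V) (G' : SimpleGraph V') (h : V → V') : Prop :=
  ∀ v w : V, G.Adj v w → G'.Adj (h v) (h w)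

/-- A skew fibration: a graph homomorphism such that for every vertex `v` of `G` and every
edge `h(v)w` of `G'` there is an edge `v w̃` of `G` with `h(w̃)w` not an edge of `G'`. -/
def IsSkewFib {V V' : Type} (G : SimpleGraph V) (G' : SimpleGraph V') (h : V → V') : Prop :=
  IsGraphHom G G' h ∧
  ∀ (v : V) (w : V'), G'.Adj (h v) w → ∃ u : V, G.Adj v u ∧ ¬ G'.Adj (h u) w

/-- A colouring of a graph: an equivalence relation relating only non-adjacent vertices. -/
def IsColouring {V : Type} (G : SimpleGraph V) (sim : V → V → Prop) : Prop :=
  Equivalence sim ∧ ∀ v w : V, sim v w → ¬ G.Adj v w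

/-- The colour class of a vertex. -/
def ColourClass {V : Type} (sim : V → V → Prop) (v : V) : Set V := {w | sim v w}

/-- A set `W` of vertices induces a matching if it is non-empty and every `w ∈ W` has a
unique `w' ∈ W` with `w w'` an edge. -/
def InducesMatching {V : Type} (G : SimpleGraph V) (W : Set V) : Prop :=
  W.Nonempty ∧ ∀ w ∈ W, ∃! w' : V, w' ∈ W ∧ G.Adj w w'

/-- A nice colouring: every colour class has at most two vertices, and no union of
two-vertex colour classes induces a matching. -/
def IsNiceColouring {V : Type} (G : SimpleGraph V) (sim : V → V → Prop) : Prop :=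
  IsColouring G sim ∧
  (∀ v : V, ∀ a ∈ ColourClass sim v, ∀ b ∈ ColourClass sim v, ∀ c ∈ ColourClass sim v,
      a = b ∨ a = c ∨ b = c) ∧
  (∀ W : Set V,
    (∀ v ∈ W, ColourClass sim v ⊆ W ∧ ∃ w : V, w ≠ v ∧ sim v w) →
    ¬ InducesMatching G W)

/-- A colour class is axiomatic (w.r.t. a map `h` into an `𝒜`-labelled graph) if it is a
single vertex `v` with `h(v)` labelled `1`, or a pair `{v,w}` with `h(v)`, `h(w)` labelled
by dual literals. -/
def AxiomaticClass {ν V V' : Type} (label : V' → Atom ν) (h : V → V') (K : Set V) : Prop :=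
  (∃ v : V, K = {v} ∧ label (h v) = Atom.tru) ∨
  (∃ v w : V, v ≠ w ∧ K = {v, w} ∧ DualLiterals (label (h v)) (label (h w)))

/-- A combinatorial proof of an `𝒜`-labelled graph `P`: a skew fibration `h : C → P` from a
nicely coloured cograph `C` all of whose colour classes are axiomatic. -/
def IsCombProof {ν V : Type} (C : SimpleGraph V) (sim : V → V → Prop)
    (P : LabGraph ν) (h : V → P.V) : Prop :=
  IsCograph C ∧ IsNiceColouring C sim ∧ IsSkewFib C P.G h ∧
  ∀ v : V, AxiomaticClass P.label h (ColourClass sim v)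

/-- `A` is a portion of the subgraph of `G` induced by `S`: `A ⊆ S` and no edge of `G`
joins `A` to `S \ A` (so that the induced subgraph on `S` is the union of those on `A`
and `S \ A`). -/
def IsPortionOn {V : Type} (G : SimpleGraph V) (S A : Set V) : Prop :=
  A ⊆ S ∧ ∀ a ∈ A, ∀ b ∈ S, b ∉ A → ¬ G.Adj a b

/-- The fusion of `G₁` and `G₂` along portions `A` of `G₁` and `B` of `G₂`: the union
`G₁ ∨ G₂` with all edges between `A` and `B` added. -/
def fusion {V₁ V₂ : Type} (G₁ : SimpleGraph V₁) (G₂ : SimpleGraph V₂)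
    (A : Set V₁) (B : Set V₂) : SimpleGraph (V₁ ⊕ V₂) where
  Adj v w :=
    match v, w with
    | .inl a, .inl b => G₁.Adj a b
    | .inr a, .inr b => G₂.Adj a b
    | .inl a, .inr b => a ∈ A ∧ b ∈ B
    | .inr b, .inl a => a ∈ A ∧ b ∈ B
  symm := ⟨by rintro (a | a) (b | b) h <;> first | exact h.symm | exact h⟩
  loopless := ⟨by rintro (a | a) h <;> exact SimpleGraph.irrefl _ h⟩

/-- The inherited colouring on a disjoint union (or fusion): vertices in different parts
are never related. -/
def simSum {V₁ V₂ : Type} (s₁ : V₁ → V₁ → Prop) (s₂ : V₂ → V₂ → Prop) :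
    V₁ ⊕ V₂ → V₁ ⊕ V₂ → Prop
  | .inl a, .inl b => s₁ a b
  | .inr a, .inr b => s₂ a b
  | _, _ => False

/-- The set `S` cannot be split into two non-empty parts with no edges in between;
i.e. the subgraph induced by `S` is connected (not a union of two non-empty graphs). -/
def NoSplit {V : Type} (G : SimpleGraph V) (S : Set V) : Prop :=
  ∀ A B : Set V, A ∪ B = S → Disjoint A B →
    (∀ a ∈ A, ∀ b ∈ B, ¬ G.Adj a b) → A = ∅ ∨ B = ∅

/-- A component: a maximal non-empty connected (induced) subgraph. -/
def IsComponent {V : Type} (G : SimpleGraph V) (S : Set V) : Prop :=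
  S.Nonempty ∧ NoSplit G S ∧ ∀ T : Set V, S ⊆ T → T.Nonempty → NoSplit G T → T = S

/-- A graph homomorphism is shallow if the preimage of every component has at most one
component (i.e. the preimage induces a connected, possibly empty, subgraph). -/
def IsShallow {V V' : Type} (G : SimpleGraph V) (H : SimpleGraph V') (h : V → V') : Prop :=
  ∀ K : Set V', IsComponent H K → NoSplit G (h ⁻¹' K)

/-- The disjoint union of `n` label-preserving isomorphic copies of a labelled graph. -/
def LabGraph.copies {ν : Type} (P : LabGraph ν) (n : ℕ) : LabGraph ν where
  V := P.V × Fin n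
  G := { Adj := fun a b => a.2 = b.2 ∧ P.G.Adj a.1 b.1
         symm := ⟨fun _ _ h => ⟨h.1.symm, h.2.symm⟩⟩
         loopless := ⟨fun a h => SimpleGraph.irrefl _ h.2⟩ }
  label := fun a => P.label a.1

end CombinatorialProofs
namespace CombinatorialProofs


section Aux

variable {V : Type}

/-- `P4`-freeness (the second half of `IsCograph`). -/
def P4Free (G : SimpleGraph V) : Prop :=
  ∀ v w x y : V, v ≠ w → v ≠ x → v ≠ y → w ≠ x → w ≠ y → x ≠ y →
    ¬ (G.Adj v w ∧ G.Adj w x ∧ G.Adj x y ∧ ¬ G.Adj v x ∧ ¬ G.Adj w y ∧ ¬ G.Adj v y)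

lemma IsCograph.p4free {G : SimpleGraph V} (h : IsCograph G) : P4Free G := h.2

lemma P4Free.compl {G : SimpleGraph V} (h : P4Free G) : P4Free Gᶜ := by
  intro v w x y hvw hvx hvy hwx hwy hxy ⟨e1, e2, e3, n1, n2, n3⟩
  rw [SimpleGraph.compl_adj] at e1 e2 e3
  have a1 : G.Adj v x := by
    by_contra hc; exact n1 ⟨hvx, hc⟩
  have a2 : G.Adj w y := by
    by_contra hc; exact n2 ⟨hwy, hc⟩
  have a3 : G.Adj v y := by
    by_contra hc; exact n3 ⟨hvy, hc⟩
  exact h x v y w (Ne.symm hvx) hxy (Ne.symm hwx) hvy hvw (Ne.symm hwy)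
    ⟨a1.symm, a3, a2.symm, e3.2, e1.2, fun hc => e2.2 hc.symm⟩

/-- A finite set that admits a fixed-point-free perfect pairing has even cardinality. -/
lemma even_ncard_of_pairing :
    ∀ (n : ℕ) (S : Set V) (R : V → V → Prop), S.Finite → S.ncard = n →
      (∀ x y, R x y → R y x) → (∀ x, ¬ R x x) →
      (∀ x ∈ S, ∃! y, y ∈ S ∧ R x y) → Even n := by
  intro n
  induction n using Nat.strong_induction_on with
  | _ n ih =>
    intro S R hfin hcard hsym hirr hpair
    rcases S.eq_empty_or_nonempty with rfl | ⟨x, hx⟩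
    · simp only [Set.ncard_empty] at hcard; exact hcard ▸ Even.zero
    obtain ⟨y, ⟨hyS, hRxy⟩, hyu⟩ := hpair x hx
    have hxy : x ≠ y := fun h => hirr x (h ▸ hRxy)
    have hsub : {x, y} ⊆ S := by
      intro z hz; rcases hz with rfl | rfl; exact hx; exact hyS
    have hn2 : 2 ≤ n := by
      have := Set.ncard_le_ncard hsub hfin
      rwa [Set.ncard_pair hxy, hcard] at this
    have hS' : (S \ {x, y}).ncard = n - 2 := by
      rw [Set.ncard_diff hsub, Set.ncard_pair hxy, hcard]
    have hpair' : ∀ z ∈ S \ {x, y}, ∃! w, w ∈ S \ {x, y} ∧ R z w := by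
      rintro z ⟨hzS, hz⟩
      simp only [Set.mem_insert_iff, Set.mem_singleton_iff, not_or] at hz
      obtain ⟨w, ⟨hwS, hRzw⟩, hwu⟩ := hpair z hzS
      have hwx : w ≠ x := by
        intro h
        have : z = y := hyu z ⟨hzS, hsym _ _ (h ▸ hRzw)⟩
        exact hz.2 this
      have hwy : w ≠ y := by
        intro h
        obtain ⟨w2, hw2, hw2u⟩ := hpair y hyS
        have h1 : z = w2 := hw2u z ⟨hzS, hsym _ _ (h ▸ hRzw)⟩
        have h2 : x = w2 := hw2u x ⟨hx, hsym _ _ hRxy⟩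
        exact hz.1 (h1.trans h2.symm)
      refine ⟨w, ⟨⟨hwS, ?_⟩, hRzw⟩, ?_⟩
      · simp only [Set.mem_insert_iff, Set.mem_singleton_iff, not_or]; exact ⟨hwx, hwy⟩
      · rintro w' ⟨⟨hw'S, _⟩, hRzw'⟩; exact hwu w' ⟨hw'S, hRzw'⟩
    have hlt : n - 2 < n := by omega
    have := ih (n - 2) hlt (S \ {x, y}) R hfin.diff hS' hsym hirr hpair'
    obtain ⟨k, hk⟩ := this
    exact ⟨k + 1, by omega⟩

/-- Key step towards Seinsche's theorem. -/
lemma nosplit_aux_core {G : SimpleGraph V} (hG : P4Free G) {S : Set V} {v : V}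
    (hv : v ∈ S) (hns : NoSplit G S) {A B : Set V}
    (hAB : A ∪ B = S \ {v}) (hd : Disjoint A B) (hnoedge : ∀ a ∈ A, ∀ b ∈ B, ¬ G.Adj a b)
    {x0 : V} (hx0A : x0 ∈ A) (hx0 : ¬ G.Adj v x0)
    {b0 : V} (hb0B : b0 ∈ B) (hb0 : G.Adj v b0) : False := by
  have hAS : A ⊆ S \ {v} := hAB ▸ Set.subset_union_left
  have hBS : B ⊆ S \ {v} := hAB ▸ Set.subset_union_right
  -- split S into X = non-neighbours of v inside A, and the rest
  set X : Set V := {a ∈ A | ¬ G.Adj v a} with hX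
  have hXA : X ⊆ A := fun z hz => hz.1
  have hedge : ∃ z ∈ X, ∃ y ∈ S \ X, G.Adj z y := by
    by_contra hc
    push_neg at hc
    have := hns X (S \ X) (by rw [Set.union_diff_cancel (fun z hz => (hAS (hXA hz)).1)])
      (Set.disjoint_sdiff_right) hc
    rcases this with h | h
    · exact (h ▸ (⟨hx0A, hx0⟩ : x0 ∈ X) : x0 ∈ (∅ : Set V))
    · have hvX : v ∈ S \ X := ⟨hv, fun hvx => (hAS (hXA hvx)).2 rfl⟩
      exact (h ▸ hvX : v ∈ (∅ : Set V))
  obtain ⟨z, hzX, y, hy, hzy⟩ := hedge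
  have hzA : z ∈ A := hXA hzX
  have hznv : ¬ G.Adj v z := hzX.2
  -- analyse y
  have hyS : y ∈ S := hy.1
  have hySd : y = v ∨ y ∈ A ∪ B := by
    by_cases h : y = v
    · exact Or.inl h
    · exact Or.inr (hAB ▸ (⟨hyS, h⟩ : y ∈ S \ {v}))
  have hyA : y ∈ A ∧ G.Adj v y := by
    rcases hySd with rfl | hy2
    · exact absurd hzy.symm hznv
    rcases hy2 with hyA | hyB
    · refine ⟨hyA, ?_⟩
      by_contra hc
      exact hy.2 ⟨hyA, hc⟩
    · exact absurd hzy (hnoedge z hzA y hyB)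
  -- P4 : b0 - v - y - z
  have hb0y : ¬ G.Adj b0 y := fun h => hnoedge y hyA.1 b0 hb0B h.symm
  have hb0z : ¬ G.Adj b0 z := fun h => hnoedge z hzA b0 hb0B h.symm
  have hb0v : b0 ≠ v := fun h => (hBS hb0B).2 h
  have hyv : y ≠ v := fun h => (hAS hyA.1).2 h
  have hzv : z ≠ v := fun h => (hAS hzA).2 h
  have hyz : y ≠ z := fun h => hznv (h ▸ hyA.2)
  have hne : ∀ {a b : V}, a ∈ A → b ∈ B → a ≠ b := fun ha hb => hd.ne_of_mem ha hb
  exact hG b0 v y z hb0v (Ne.symm (hne hyA.1 hb0B)) (Ne.symm (hne hzA hb0B))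
    (Ne.symm hyv) (Ne.symm hzv) hyz
    ⟨hb0.symm, hyA.2, hzy.symm, hb0y, hznv, hb0z⟩

end Aux



section Seinsche

variable {V : Type}

lemma nosplit_aux {G : SimpleGraph V} (hG : P4Free G) {S : Set V} {v : V} (hv : v ∈ S)
    (hns : NoSplit G S) (hnc : NoSplit Gᶜ S) {A B : Set V}
    (hAB : A ∪ B = S \ {v}) (hd : Disjoint A B) (hA : A.Nonempty) (hB : B.Nonempty)
    (hnoedge : ∀ a ∈ A, ∀ b ∈ B, ¬ G.Adj a b) : False := by
  have hAS : A ⊆ S \ {v} := hAB ▸ Set.subset_union_left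
  -- v has a neighbour in every part
  have hnbr : ∀ (A' B' : Set V), A' ∪ B' = S \ {v} → Disjoint A' B' →
      (∀ a ∈ A', ∀ b ∈ B', ¬ G.Adj a b) → A'.Nonempty → B'.Nonempty →
      ∃ a ∈ A', G.Adj v a := by
    intro A' B' hAB' hd' hne' hA' hB'
    by_contra hc
    push_neg at hc
    have hsub' : A' ⊆ S \ {v} := hAB' ▸ Set.subset_union_left
    have hun : A' ∪ (B' ∪ {v}) = S := by
      rw [← Set.union_assoc, hAB', Set.diff_union_self,
        Set.union_eq_self_of_subset_right (Set.singleton_subset_iff.mpr hv)]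
    have hdis : Disjoint A' (B' ∪ {v}) := by
      rw [Set.disjoint_union_right]
      exact ⟨hd', Set.disjoint_singleton_right.mpr (fun h => (hsub' h).2 rfl)⟩
    have hedges : ∀ a ∈ A', ∀ b ∈ B' ∪ {v}, ¬ G.Adj a b := by
      intro a ha b hb
      rcases hb with hb | hb
      · exact hne' a ha b hb
      · rw [Set.mem_singleton_iff] at hb; subst hb
        exact fun h => hc a ha h.symm
    rcases hns A' (B' ∪ {v}) hun hdis hedges with h | h
    · exact absurd (h ▸ hA') (by simp)
    · have : v ∈ B' ∪ {v} := Or.inr rfl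
      rw [h] at this; exact this
  obtain ⟨a0, ha0A, ha0⟩ := hnbr A B hAB hd hnoedge hA hB
  obtain ⟨b0, hb0B, hb0⟩ := hnbr B A (by rw [Set.union_comm]; exact hAB) hd.symm
    (fun b hb a ha h => hnoedge a ha b hb h.symm) hB hA
  -- v has a non-neighbour in S \ {v}
  have hx0 : ∃ x0 ∈ S \ {v}, ¬ G.Adj v x0 := by
    by_contra hc
    push_neg at hc
    have hun : {v} ∪ (S \ {v}) = S := by
      rw [Set.singleton_union, Set.insert_diff_singleton, Set.insert_eq_self.mpr hv]
    have hdis : Disjoint {v} (S \ {v}) :=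
      Set.disjoint_singleton_left.mpr (fun h => h.2 rfl)
    have hedges : ∀ a ∈ ({v} : Set V), ∀ b ∈ S \ {v}, ¬ Gᶜ.Adj a b := by
      intro a ha b hb
      rw [Set.mem_singleton_iff] at ha; subst ha
      rw [SimpleGraph.compl_adj]
      rintro ⟨hne, hnadj⟩
      exact hnadj (hc b hb)
    rcases hnc {v} (S \ {v}) hun hdis hedges with h | h
    · have : v ∈ ({v} : Set V) := rfl
      rw [h] at this; exact this
    · have := hAS ha0A
      rw [h] at this; exact this
  obtain ⟨x0, hx0S, hx0n⟩ := hx0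
  have hx0AB : x0 ∈ A ∪ B := by rw [hAB]; exact hx0S
  rcases hx0AB with hx0A | hx0B
  · exact nosplit_aux_core hG hv hns hAB hd hnoedge hx0A hx0n hb0B hb0
  · exact nosplit_aux_core hG hv hns (by rw [Set.union_comm]; exact hAB) hd.symm
      (fun b hb a ha h => hnoedge a ha b hb h.symm) hx0B hx0n ha0A ha0

/-- Seinsche's theorem: a finite `P4`-free graph on at least two vertices cannot be
connected together with its complement. -/
lemma no_both_nosplit {G : SimpleGraph V} (hG : P4Free G) :
    ∀ (n : ℕ) (S : Set V), S.Finite → S.ncard = n → 2 ≤ n →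
      NoSplit G S → NoSplit Gᶜ S → False := by
  intro n
  induction n using Nat.strong_induction_on with
  | _ n ih =>
    intro S hfin hcard h2 hns hnc
    by_cases hn : n = 2
    · subst hn
      obtain ⟨x, y, hxy, rfl⟩ := Set.ncard_eq_two.mp hcard
      have hadj : ∀ (H : SimpleGraph V), NoSplit H {x, y} → H.Adj x y := by
        intro H hns'
        by_contra hc
        have := hns' {x} {y} (by rw [Set.singleton_union])
          (Set.disjoint_singleton.mpr hxy)
          (by intro a ha b hb; rw [Set.mem_singleton_iff] at ha hb; subst ha; subst hb; exact hc)
        rcases this with h | h <;> simp at h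
      have h1 := hadj G hns
      have h2' := hadj Gᶜ hnc
      rw [SimpleGraph.compl_adj] at h2'
      exact h2'.2 h1
    · have hSne : S.Nonempty := by
        apply Set.nonempty_of_ncard_ne_zero; omega
      obtain ⟨v, hv⟩ := hSne
      have hfin' : (S \ {v}).Finite := hfin.diff
      have hcard' : (S \ {v}).ncard = n - 1 := by
        rw [Set.ncard_diff_singleton_of_mem hv, hcard]
      by_cases hcase : NoSplit G (S \ {v})
      · have hcase2 : ¬ NoSplit Gᶜ (S \ {v}) := fun hnc' =>
          ih (n - 1) (by omega) (S \ {v}) hfin' hcard' (by omega) hcase hnc'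
        unfold NoSplit at hcase2
        push_neg at hcase2
        obtain ⟨A, B, hAB, hd, hnoe, hA, hB⟩ := hcase2
        exact nosplit_aux hG.compl hv hnc (by rw [compl_compl]; exact hns) hAB hd
          hA hB hnoe
      · unfold NoSplit at hcase
        push_neg at hcase
        obtain ⟨A, B, hAB, hd, hnoe, hA, hB⟩ := hcase
        exact nosplit_aux hG hv hns hnc hAB hd
          hA hB hnoe

lemma walk_stay {G : SimpleGraph V} {A B K : Set V} (hun : A ∪ B = K)
    (hcl : ∀ x ∈ K, ∀ y, G.Adj x y → y ∈ K)
    (hnoe : ∀ a ∈ A, ∀ b ∈ B, ¬ G.Adj a b) :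
    ∀ {x y : V}, G.Walk x y → x ∈ A → y ∈ A := by
  intro x y p
  induction p with
  | nil => exact fun h => h
  | @cons u z w h q ih =>
    intro hu
    have huK : u ∈ K := by rw [← hun]; exact Or.inl hu
    have hzK : z ∈ K := hcl u huK z h
    have hz' : z ∈ A ∪ B := by rw [hun]; exact hzK
    rcases hz' with hz | hz
    · exact ih hz
    · exact absurd h (hnoe u hu z hz)

lemma nosplit_reach (G : SimpleGraph V) (u : V) :
    NoSplit G {w | G.Reachable u w} := by
  intro A B hun hd hnoe
  by_contra hc
  push_neg at hc
  obtain ⟨a, ha⟩ := hc.1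
  obtain ⟨b, hb⟩ := hc.2
  have hcl : ∀ x ∈ {w | G.Reachable u w}, ∀ y, G.Adj x y → y ∈ {w | G.Reachable u w} :=
    fun x hx y hxy => hx.trans hxy.reachable
  have huK : u ∈ {w | G.Reachable u w} := SimpleGraph.Reachable.refl u
  have hu' : u ∈ A ∪ B := by rw [hun]; exact huK
  rcases hu' with hu | hu
  · have hbK : G.Reachable u b := by
      have : b ∈ A ∪ B := Or.inr hb
      rw [hun] at this; exact this
    obtain ⟨p⟩ := hbK
    exact Set.disjoint_left.mp hd (walk_stay hun hcl hnoe p hu) hb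
  · have haK : G.Reachable u a := by
      have : a ∈ A ∪ B := Or.inl ha
      rw [hun] at this; exact this
    obtain ⟨p⟩ := haK
    exact Set.disjoint_left.mp hd ha
      (walk_stay (by rw [Set.union_comm]; exact hun) hcl
        (fun x hx y hy h => hnoe y hy x hx h.symm) p hu)

/-- Decomposition: a finite `P4`-free graph with an edge contains a "join part". -/
lemma decomp [Fintype V] {G : SimpleGraph V} (hG : P4Free G)
    {u v : V} (huv : G.Adj u v) :
    ∃ S2 S3 : Set V, S2.Nonempty ∧ S3.Nonempty ∧ Disjoint S2 S3 ∧
      (∀ x ∈ S2, ∀ y ∈ S3, G.Adj x y) ∧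
      (∀ x ∈ S2 ∪ S3, ∀ y, G.Adj x y → y ∈ S2 ∪ S3) := by
  set K := {w | G.Reachable u w} with hK
  have huK : u ∈ K := SimpleGraph.Reachable.refl u
  have hvK : v ∈ K := huv.reachable
  have hcl : ∀ x ∈ K, ∀ y, G.Adj x y → y ∈ K := fun x hx y hxy => hx.trans hxy.reachable
  have hfin : K.Finite := Set.toFinite K
  have hcard : 2 ≤ K.ncard := by
    rw [Nat.succ_le_iff, Set.one_lt_ncard_iff hfin]
    exact ⟨u, v, huK, hvK, huv.ne⟩
  have hnc : ¬ NoSplit Gᶜ K := fun hnc =>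
    no_both_nosplit hG K.ncard K hfin rfl hcard (nosplit_reach G u) hnc
  unfold NoSplit at hnc
  push_neg at hnc
  obtain ⟨A, B, hAB, hd, hnoe, hA, hB⟩ := hnc
  refine ⟨A, B, hA, hB, hd, ?_, ?_⟩
  · intro x hx y hy
    have hne : x ≠ y := hd.ne_of_mem hx hy
    have := hnoe x hx y hy
    rw [SimpleGraph.compl_adj] at this
    by_contra hc
    exact this ⟨hne, hc⟩
  · intro x hx y hxy
    rw [hAB] at hx
    rw [hAB]
    exact hcl x hx y hxy

end Seinsche


section Restrict

variable {ν : Type}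

/-- The induced labelled subgraph on a set of vertices. -/
def LabGraph.restrict (P : LabGraph ν) (S : Set P.V) : LabGraph ν :=
  ⟨S, SimpleGraph.comap Subtype.val P.G, fun x => P.label x.val⟩

lemma isCograph_restrict {P : LabGraph ν} (hP : IsCograph P.G) {S : Set P.V}
    (hS : S.Nonempty) : IsCograph (P.restrict S).G := by
  refine ⟨⟨⟨hS.choose, hS.choose_spec⟩⟩, ?_⟩
  intro v w x y hvw hvx hvy hwx hwy hxy hconj
  exact hP.2 v.val w.val x.val y.val (fun h => hvw (Subtype.ext h))
    (fun h => hvx (Subtype.ext h)) (fun h => hvy (Subtype.ext h))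
    (fun h => hwx (Subtype.ext h)) (fun h => hwy (Subtype.ext h))
    (fun h => hxy (Subtype.ext h)) hconj

lemma clause_lift {P : LabGraph ν} {S2 S3 : Set P.V}
    (hne2 : S2.Nonempty) (hdis : Disjoint S2 S3)
    (hcomp : ∀ x ∈ S2, ∀ y ∈ S3, P.G.Adj x y)
    (hclosed : ∀ x ∈ S2 ∪ S3, ∀ y, P.G.Adj x y → y ∈ S2 ∪ S3)
    {W : Set ↥(S3ᶜ)} (hW : IsClause (P.restrict S3ᶜ).G W) :
    IsClause P.G (Subtype.val '' W) := by
  obtain ⟨hWsub, hWstab, hWmax⟩ := hW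
  have s2ex : ∃ x ∈ W, (x : P.V) ∈ S2 := by
    by_contra hc
    push_neg at hc
    obtain ⟨s2, hs2⟩ := hne2
    have hs2' : s2 ∈ S3ᶜ := fun h => Set.disjoint_left.mp hdis hs2 h
    have hstab : IsStable (P.restrict S3ᶜ).G (insert ⟨s2, hs2'⟩ W) := by
      intro a ha b hb
      rcases Set.mem_insert_iff.mp ha with rfl | ha' <;>
        rcases Set.mem_insert_iff.mp hb with rfl | hb'
      · exact fun h => P.G.loopless.irrefl _ h
      · intro hadj
        have hb3 : Subtype.val b ∈ S2 ∪ S3 := hclosed s2 (Or.inl hs2) (Subtype.val b) hadj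
        rcases hb3 with h | h
        · exact hc b hb' h
        · exact b.prop h
      · intro hadj
        have ha3 : Subtype.val a ∈ S2 ∪ S3 := hclosed s2 (Or.inl hs2) (Subtype.val a) hadj.symm
        rcases ha3 with h | h
        · exact hc a ha' h
        · exact a.prop h
      · exact hWstab a ha' b hb'
    have heq := hWmax (insert ⟨s2, hs2'⟩ W) (fun _ _ => trivial) hstab (Set.subset_insert _ _)
    have hzW : (⟨s2, hs2'⟩ : ↥(S3ᶜ)) ∈ W := heq ▸ Set.mem_insert _ W
    exact hc _ hzW hs2
  obtain ⟨x0, hx0W, hx0S2⟩ := s2ex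
  refine ⟨fun _ _ => trivial, ?_, ?_⟩
  · rintro a ⟨xa, hxa, rfl⟩ b ⟨xb, hxb, rfl⟩ hadj
    exact hWstab xa hxa xb hxb hadj
  · intro W' _ hstab' hsup
    have hS3 : ∀ z ∈ W', z ∉ S3 := by
      intro z hz hz3
      exact hstab' x0.val (hsup ⟨x0, hx0W, rfl⟩) z hz (hcomp _ hx0S2 _ hz3)
    have hWeq : {x : ↥(S3ᶜ) | x.val ∈ W'} = W := by
      apply hWmax
      · exact fun _ _ => trivial
      · exact fun a ha b hb hadj => hstab' a.val ha b.val hb hadj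
      · exact fun x hx => hsup ⟨x, hx, rfl⟩
    ext z
    constructor
    · intro hz
      have hz3 : z ∈ S3ᶜ := hS3 z hz
      have hzW : (⟨z, hz3⟩ : ↥(S3ᶜ)) ∈ W := by rw [← hWeq]; exact hz
      exact ⟨⟨z, hz3⟩, hzW, rfl⟩
    · exact fun hz => hsup hz

lemma isTrue_restrict {P : LabGraph ν} (ht : P.IsTrue) {S2 S3 : Set P.V}
    (hne2 : S2.Nonempty) (hdis : Disjoint S2 S3)
    (hcomp : ∀ x ∈ S2, ∀ y ∈ S3, P.G.Adj x y)
    (hclosed : ∀ x ∈ S2 ∪ S3, ∀ y, P.G.Adj x y → y ∈ S2 ∪ S3) :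
    (P.restrict S3ᶜ).IsTrue := by
  intro W hW
  have := ht (Subtype.val '' W) (clause_lift hne2 hdis hcomp hclosed hW)
  rcases this with ⟨v, ⟨x, hxW, rfl⟩, hlab⟩ | ⟨v, ⟨x, hxW, rfl⟩, w, ⟨y, hyW, rfl⟩, hdual⟩
  · exact Or.inl ⟨x, hxW, hlab⟩
  · exact Or.inr ⟨x, hxW, y, hyW, hdual⟩

end Restrict


section Combine

variable {ν : Type}

lemma colourClass_inl {U1 U2 : Type} (s1 : U1 → U1 → Prop) (s2 : U2 → U2 → Prop) (a : U1) :
    ColourClass (simSum s1 s2) (Sum.inl a) = Sum.inl '' ColourClass s1 a := by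
  ext w
  cases w with
  | inl b =>
    constructor
    · intro h; exact ⟨b, h, rfl⟩
    · rintro ⟨c, hc, he⟩; rw [← Sum.inl.inj he]; exact hc
  | inr b =>
    constructor
    · intro h; exact h.elim
    · rintro ⟨c, _, he⟩; exact (Sum.inl_ne_inr he).elim

lemma colourClass_inr {U1 U2 : Type} (s1 : U1 → U1 → Prop) (s2 : U2 → U2 → Prop) (a : U2) :
    ColourClass (simSum s1 s2) (Sum.inr a) = Sum.inr '' ColourClass s2 a := by
  ext w
  cases w with
  | inl b =>
    constructor
    · intro h; exact h.elim
    · rintro ⟨c, _, he⟩; exact (Sum.inr_ne_inl he).elim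
  | inr b =>
    constructor
    · intro h; exact ⟨b, h, rfl⟩
    · rintro ⟨c, hc, he⟩; rw [← Sum.inr.inj he]; exact hc

lemma axclass_map {V1 V2 U U' : Type} {lab : V1 → Atom ν} {lab' : V2 → Atom ν}
    {h : U → V1} {h' : U' → V2} {K : Set U} (e : U → U') (he : Function.Injective e)
    (hcomm : ∀ x, lab' (h' (e x)) = lab (h x)) (hax : AxiomaticClass lab h K) :
    AxiomaticClass lab' h' (e '' K) := by
  rcases hax with ⟨v, hK, htru⟩ | ⟨v, w, hvw, hK, hdual⟩
  · exact Or.inl ⟨e v, by rw [hK, Set.image_singleton], by rw [hcomm]; exact htru⟩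
  · exact Or.inr ⟨e v, e w, fun hh => hvw (he hh),
      by rw [hK, Set.image_insert_eq, Set.image_singleton],
      by rw [hcomm, hcomm]; exact hdual⟩

lemma fusion_no_matching {U1 U2 : Type} [Fintype U1] [Fintype U2]
    {C1 : SimpleGraph U1} {C2 : SimpleGraph U2} {sim1 : U1 → U1 → Prop}
    {sim2 : U2 → U2 → Prop} {A : Set U1} {B : Set U2}
    (hnice1 : IsNiceColouring C1 sim1) (hnice2 : IsNiceColouring C2 sim2)
    (hAcl : ∀ {a b : U1}, a ∈ A → C1.Adj a b → b ∈ A)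
    (W : Set (U1 ⊕ U2))
    (hWcl : ∀ v ∈ W, ColourClass (simSum sim1 sim2) v ⊆ W ∧
      ∃ w : U1 ⊕ U2, w ≠ v ∧ simSum sim1 sim2 v w) :
    ¬ InducesMatching (fusion C1 C2 A B) W := by
  rintro ⟨hWne, hWmat⟩
  set W1 : Set U1 := {a | Sum.inl a ∈ W} with hW1
  set W2 : Set U2 := {b | Sum.inr b ∈ W} with hW2
  have F1 : ∀ a ∈ W1, ColourClass sim1 a ⊆ W1 ∧ ∃ a', a' ≠ a ∧ sim1 a a' := by
    intro a ha
    obtain ⟨hcl, w', hw'ne, hw'sim⟩ := hWcl (Sum.inl a) ha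
    refine ⟨fun b hb => hcl hb, ?_⟩
    cases w' with
    | inl b => exact ⟨b, fun h => hw'ne (by rw [h]), hw'sim⟩
    | inr b => exact hw'sim.elim
  have F2 : ∀ b ∈ W2, ColourClass sim2 b ⊆ W2 ∧ ∃ b', b' ≠ b ∧ sim2 b b' := by
    intro a ha
    obtain ⟨hcl, w', hw'ne, hw'sim⟩ := hWcl (Sum.inr a) ha
    refine ⟨fun b hb => hcl hb, ?_⟩
    cases w' with
    | inl b => exact hw'sim.elim
    | inr b => exact ⟨b, fun h => hw'ne (by rw [h]), hw'sim⟩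
  have nocross : (W1 ∩ A = ∅ ∨ W2 ∩ B = ∅) → False := by
    intro hcase
    have hnoc : ∀ a ∈ W1, ∀ b ∈ W2, ¬ (fusion C1 C2 A B).Adj (Sum.inl a) (Sum.inr b) := by
      rintro a ha b hb ⟨haA, hbB⟩
      rcases hcase with h | h
      · have : a ∈ (∅ : Set U1) := h ▸ (⟨ha, haA⟩ : a ∈ W1 ∩ A)
        exact this
      · have : b ∈ (∅ : Set U2) := h ▸ (⟨hb, hbB⟩ : b ∈ W2 ∩ B)
        exact this
    obtain ⟨w0, hw0⟩ := hWne
    cases w0 with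
    | inl a0 =>
      refine hnice1.2.2 W1 F1 ⟨⟨a0, hw0⟩, ?_⟩
      intro a ha
      obtain ⟨u, ⟨huW, huAdj⟩, huu⟩ := hWmat (Sum.inl a) ha
      cases u with
      | inl b =>
        refine ⟨b, ⟨huW, huAdj⟩, ?_⟩
        rintro b' ⟨hb'W, hb'Adj⟩
        exact Sum.inl.inj (huu (Sum.inl b') ⟨hb'W, hb'Adj⟩)
      | inr b => exact absurd huAdj (hnoc a ha b huW)
    | inr b0 =>
      refine hnice2.2.2 W2 F2 ⟨⟨b0, hw0⟩, ?_⟩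
      intro b hb
      obtain ⟨u, ⟨huW, huAdj⟩, huu⟩ := hWmat (Sum.inr b) hb
      cases u with
      | inl a => exact absurd huAdj.symm (hnoc a huW b hb)
      | inr c =>
        refine ⟨c, ⟨huW, huAdj⟩, ?_⟩
        rintro c' ⟨hc'W, hc'Adj⟩
        exact Sum.inr.inj (huu (Sum.inr c') ⟨hc'W, hc'Adj⟩)
  by_cases hWA : (W1 ∩ A).Nonempty
  case neg => exact nocross (Or.inl (Set.not_nonempty_iff_eq_empty.mp hWA))
  by_cases hWB : (W2 ∩ B).Nonempty
  case neg => exact nocross (Or.inr (Set.not_nonempty_iff_eq_empty.mp hWB))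
  obtain ⟨a, haW, haA⟩ := hWA
  obtain ⟨b, hbW, hbB⟩ := hWB
  obtain ⟨u, ⟨huW, huAdj⟩, huu⟩ := hWmat (Sum.inl a) haW
  obtain ⟨u', ⟨hu'W, hu'Adj⟩, hu'u⟩ := hWmat (Sum.inr b) hbW
  have hWAa : ∀ a' ∈ W1, a' ∈ A → a' = a := by
    intro a' ha'W ha'A
    have e1 := hu'u (Sum.inl a') ⟨ha'W, ⟨ha'A, hbB⟩⟩
    have e2 := hu'u (Sum.inl a) ⟨haW, ⟨haA, hbB⟩⟩
    exact Sum.inl.inj (e1.trans e2.symm)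
  have hano : ∀ c ∈ W1, ¬ C1.Adj a c := by
    intro c hcW hadj
    have e1 := huu (Sum.inl c) ⟨hcW, hadj⟩
    have e2 := huu (Sum.inr b) ⟨hbW, ⟨haA, hbB⟩⟩
    exact Sum.inl_ne_inr (e1.trans e2.symm)
  have heven1 : Even W1.ncard := by
    apply even_ncard_of_pairing W1.ncard W1 (fun x y => sim1 x y ∧ x ≠ y)
      (Set.toFinite _) rfl
    · exact fun x y ⟨h, hne⟩ => ⟨hnice1.1.1.symm h, hne.symm⟩
    · exact fun x ⟨_, hne⟩ => hne rfl
    · intro x hx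
      obtain ⟨hcl, x', hx'ne, hx'sim⟩ := F1 x hx
      refine ⟨x', ⟨hcl hx'sim, hx'sim, hx'ne.symm⟩, ?_⟩
      rintro y ⟨_, hys, hxy⟩
      rcases hnice1.2.1 x y hys x' hx'sim x (hnice1.1.1.refl x) with h | h | h
      · exact h
      · exact absurd h.symm hxy
      · exact absurd h hx'ne
  have heven2 : Even (W1 \ {a}).ncard := by
    apply even_ncard_of_pairing (W1 \ {a}).ncard (W1 \ {a}) (fun x y => C1.Adj x y)
      (Set.toFinite _) rfl
    · exact fun x y h => h.symm
    · exact fun x h => C1.loopless.irrefl x h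
    · rintro x ⟨hxW, hxa⟩
      obtain ⟨u2, ⟨hu2W, hu2Adj⟩, hu2u⟩ := hWmat (Sum.inl x) hxW
      cases u2 with
      | inr c =>
        obtain ⟨hxA, _⟩ := hu2Adj
        exact absurd (hWAa x hxW hxA) hxa
      | inl c =>
        have hca : c ≠ a := by
          intro hc; subst hc
          exact hano x hxW hu2Adj.symm
        refine ⟨c, ⟨⟨hu2W, hca⟩, hu2Adj⟩, ?_⟩
        rintro y ⟨⟨hyW, _⟩, hyAdj⟩
        exact Sum.inl.inj ((hu2u (Sum.inl y) ⟨hyW, hyAdj⟩).trans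
          (hu2u (Sum.inl c) ⟨hu2W, hu2Adj⟩).symm)
  have hcount := Set.ncard_diff_singleton_add_one haW (Set.toFinite W1)
  obtain ⟨j, hj⟩ := heven1
  obtain ⟨k, hk⟩ := heven2
  omega

lemma extend_combproof {P : LabGraph ν} {T D : Set P.V} {U : Type} {C : SimpleGraph U}
    {sim : U → U → Prop} {f : U → ↥T} (hcp : IsCombProof C sim (P.restrict T) f)
    (hD : ∀ v : U, (f v).val ∈ D)
    (hDedge : ∀ x ∈ D, ∀ y, P.G.Adj x y → y ∈ T) :
    IsCombProof C sim P (fun v => (f v).val) := by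
  obtain ⟨hcog, hnice, ⟨hhom, hskew⟩, hax⟩ := hcp
  refine ⟨hcog, hnice, ⟨fun v w h => hhom v w h, ?_⟩, hax⟩
  intro v w hadj
  have hwT : w ∈ T := hDedge _ (hD v) w hadj
  obtain ⟨u, hu1, hu2⟩ := hskew v ⟨w, hwT⟩ hadj
  exact ⟨u, hu1, hu2⟩

lemma combine {P : LabGraph ν} [Fintype P.V] {S2 S3 : Set P.V}
    (hdis : Disjoint S2 S3)
    (hcomp : ∀ x ∈ S2, ∀ y ∈ S3, P.G.Adj x y)
    (hclosed : ∀ x ∈ S2 ∪ S3, ∀ y, P.G.Adj x y → y ∈ S2 ∪ S3)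
    {U1 U2 : Type} [Fintype U1] [Fintype U2]
    {C1 : SimpleGraph U1} {C2 : SimpleGraph U2} {sim1 : U1 → U1 → Prop}
    {sim2 : U2 → U2 → Prop} {f : U1 → ↥(S3ᶜ)} {g : U2 → ↥(S2ᶜ)}
    (h1 : IsCombProof C1 sim1 (P.restrict S3ᶜ) f)
    (h2 : IsCombProof C2 sim2 (P.restrict S2ᶜ) g) :
    ∃ (U : Type) (_ : Fintype U) (C : SimpleGraph U) (sim : U → U → Prop)
      (h : U → P.V), IsCombProof C sim P h := by
  classical
  set A : Set U1 := {x | (f x).val ∈ S2} with hA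
  set B : Set U2 := {y | (g y).val ∈ S3} with hB
  by_cases hAe : A.Nonempty
  case neg =>
    rw [Set.not_nonempty_iff_eq_empty] at hAe
    refine ⟨U1, inferInstance, C1, sim1, _,
      extend_combproof h1 (D := (S2 ∪ S3)ᶜ) ?_ ?_⟩
    · intro v
      rintro (h | h)
      · have : v ∈ A := h
        rw [hAe] at this; exact this
      · exact (f v).prop h
    · intro x hx y hxy h3
      exact hx (hclosed y (Or.inr h3) x hxy.symm)
  by_cases hBe : B.Nonempty
  case neg =>
    rw [Set.not_nonempty_iff_eq_empty] at hBe
    refine ⟨U2, inferInstance, C2, sim2, _,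
      extend_combproof h2 (D := (S2 ∪ S3)ᶜ) ?_ ?_⟩
    · intro v
      rintro (h | h)
      · exact (g v).prop h
      · have : v ∈ B := h
        rw [hBe] at this; exact this
    · intro x hx y hxy h2'
      exact hx (hclosed y (Or.inl h2') x hxy.symm)
  obtain ⟨hcog1, hnice1, ⟨hhom1, hskew1⟩, hax1⟩ := h1
  obtain ⟨hcog2, hnice2, ⟨hhom2, hskew2⟩, hax2⟩ := h2
  have hAcl : ∀ {a b : U1}, a ∈ A → C1.Adj a b → b ∈ A := by
    intro a b ha hab
    have hadj : P.G.Adj (f a).val (f b).val := hhom1 a b hab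
    rcases hclosed _ (Or.inl ha) _ hadj with h | h
    · exact h
    · exact absurd h (f b).prop
  have hBcl : ∀ {a b : U2}, a ∈ B → C2.Adj a b → b ∈ B := by
    intro a b ha hab
    have hadj : P.G.Adj (g a).val (g b).val := hhom2 a b hab
    rcases hclosed _ (Or.inr ha) _ hadj with h | h
    · exact absurd h (g b).prop
    · exact h
  have hskewB : ∀ w ∈ S3, ∃ u ∈ B, ¬ P.G.Adj (g u).val w := by
    intro w hw
    obtain ⟨u0, hu0⟩ := hBe
    by_cases hadj : P.G.Adj (g u0).val w
    · have hwc : w ∈ S2ᶜ := fun h => Set.disjoint_left.mp hdis h hw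
      obtain ⟨u1, hu1C, hu1n⟩ := hskew2 u0 ⟨w, hwc⟩ hadj
      exact ⟨u1, hBcl hu0 hu1C, hu1n⟩
    · exact ⟨u0, hu0, hadj⟩
  have hskewA : ∀ w ∈ S2, ∃ u ∈ A, ¬ P.G.Adj (f u).val w := by
    intro w hw
    obtain ⟨u0, hu0⟩ := hAe
    by_cases hadj : P.G.Adj (f u0).val w
    · have hwc : w ∈ S3ᶜ := fun h => Set.disjoint_left.mp hdis hw h
      obtain ⟨u1, hu1C, hu1n⟩ := hskew1 u0 ⟨w, hwc⟩ hadj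
      exact ⟨u1, hAcl hu0 hu1C, hu1n⟩
    · exact ⟨u0, hu0, hadj⟩
  refine ⟨U1 ⊕ U2, inferInstance, fusion C1 C2 A B, simSum sim1 sim2,
    Sum.elim (fun x => (f x).val) (fun y => (g y).val), ?_, ?_, ?_, ?_⟩
  · -- cograph
    refine ⟨⟨Sum.inl hcog1.1.some⟩, ?_⟩
    intro v w x y hvw hvx hvy hwx hwy hxy
    rintro ⟨e1, e2, e3, n1, n2, n3⟩
    set inS : U1 ⊕ U2 → Prop := Sum.elim (· ∈ A) (· ∈ B) with hinS
    have claim1 : ∀ u u' : U1 ⊕ U2, (fusion C1 C2 A B).Adj u u' → inS u → inS u' := by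
      rintro (a | a) (b | b) h hu
      · exact hAcl hu h
      · exact h.2
      · exact h.1
      · exact hBcl hu h
    have claim1' : ∀ u u' : U1 ⊕ U2, (fusion C1 C2 A B).Adj u u' → (inS u ↔ inS u') :=
      fun u u' h => ⟨claim1 u u' h, claim1 u' u h.symm⟩
    by_cases hv : inS v
    · have hw : inS w := (claim1' v w e1).mp hv
      have hx : inS x := (claim1' w x e2).mp hw
      have hy : inS y := (claim1' x y e3).mp hx
      rcases v with a | a <;> rcases w with b | b <;> rcases x with c | c <;>
        rcases y with d | d <;>
        first
          | exact n1 ⟨hv, hx⟩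
          | exact n1 ⟨hx, hv⟩
          | exact n2 ⟨hw, hy⟩
          | exact n2 ⟨hy, hw⟩
          | exact n3 ⟨hv, hy⟩
          | exact n3 ⟨hy, hv⟩
          | exact hcog1.2 a b c d (fun h => hvw (by rw [h])) (fun h => hvx (by rw [h]))
              (fun h => hvy (by rw [h])) (fun h => hwx (by rw [h]))
              (fun h => hwy (by rw [h])) (fun h => hxy (by rw [h]))
              ⟨e1, e2, e3, n1, n2, n3⟩
          | exact hcog2.2 a b c d (fun h => hvw (by rw [h])) (fun h => hvx (by rw [h]))
              (fun h => hvy (by rw [h])) (fun h => hwx (by rw [h]))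
              (fun h => hwy (by rw [h])) (fun h => hxy (by rw [h]))
              ⟨e1, e2, e3, n1, n2, n3⟩
    · have hw : ¬ inS w := fun h => hv ((claim1' v w e1).mpr h)
      have hx : ¬ inS x := fun h => hw ((claim1' w x e2).mpr h)
      have hy : ¬ inS y := fun h => hx ((claim1' x y e3).mpr h)
      rcases v with a | a <;> rcases w with b | b <;> rcases x with c | c <;>
        rcases y with d | d <;>
        first
          | exact hv e1.1
          | exact hv e1.2
          | exact hw e2.1
          | exact hw e2.2
          | exact hx e3.1
          | exact hx e3.2
          | exact hcog1.2 a b c d (fun h => hvw (by rw [h])) (fun h => hvx (by rw [h]))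
              (fun h => hvy (by rw [h])) (fun h => hwx (by rw [h]))
              (fun h => hwy (by rw [h])) (fun h => hxy (by rw [h]))
              ⟨e1, e2, e3, n1, n2, n3⟩
          | exact hcog2.2 a b c d (fun h => hvw (by rw [h])) (fun h => hvx (by rw [h]))
              (fun h => hvy (by rw [h])) (fun h => hwx (by rw [h]))
              (fun h => hwy (by rw [h])) (fun h => hxy (by rw [h]))
              ⟨e1, e2, e3, n1, n2, n3⟩
  · -- nice colouring
    refine ⟨⟨⟨?_, ?_, ?_⟩, ?_⟩, ?_, ?_⟩
    · rintro (a | a)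
      · exact hnice1.1.1.refl a
      · exact hnice2.1.1.refl a
    · rintro (a | a) (b | b) h
      · exact hnice1.1.1.symm h
      · exact h.elim
      · exact h.elim
      · exact hnice2.1.1.symm h
    · rintro (a | a) (b | b) (c | c) hab hbc
      · exact hnice1.1.1.trans hab hbc
      · exact hbc.elim
      · exact hab.elim
      · exact hab.elim
      · exact hab.elim
      · exact hab.elim
      · exact hbc.elim
      · exact hnice2.1.1.trans hab hbc
    · rintro (a | a) (b | b) h
      · exact hnice1.1.2 a b h
      · exact h.elim
      · exact h.elim
      · exact hnice2.1.2 a b h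
    · rintro (v | v) a ha b hb c hc
      · rw [colourClass_inl] at ha hb hc
        obtain ⟨a0, ha0, rfl⟩ := ha
        obtain ⟨b0, hb0, rfl⟩ := hb
        obtain ⟨c0, hc0, rfl⟩ := hc
        rcases hnice1.2.1 v a0 ha0 b0 hb0 c0 hc0 with h | h | h
        · exact Or.inl (by rw [h])
        · exact Or.inr (Or.inl (by rw [h]))
        · exact Or.inr (Or.inr (by rw [h]))
      · rw [colourClass_inr] at ha hb hc
        obtain ⟨a0, ha0, rfl⟩ := ha
        obtain ⟨b0, hb0, rfl⟩ := hb
        obtain ⟨c0, hc0, rfl⟩ := hc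
        rcases hnice2.2.1 v a0 ha0 b0 hb0 c0 hc0 with h | h | h
        · exact Or.inl (by rw [h])
        · exact Or.inr (Or.inl (by rw [h]))
        · exact Or.inr (Or.inr (by rw [h]))
    · exact fun W hWcl => fusion_no_matching hnice1 hnice2 (fun ha h => hAcl ha h) W hWcl
  · -- skew fibration
    constructor
    · rintro (x | x) (y | y) hadj
      · exact hhom1 x y hadj
      · exact hcomp _ hadj.1 _ hadj.2
      · exact (hcomp _ hadj.1 _ hadj.2).symm
      · exact hhom2 x y hadj
    · rintro (x | x) w hadj
      · by_cases hw3 : w ∈ S3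
        · have hxA : x ∈ A := by
            by_contra hxA
            have h1 : (f x).val ∉ S2 ∪ S3 := by
              rintro (h | h)
              · exact hxA h
              · exact (f x).prop h
            exact h1 (hclosed w (Or.inr hw3) _ hadj.symm)
          obtain ⟨u, huB, hun⟩ := hskewB w hw3
          exact ⟨Sum.inr u, ⟨hxA, huB⟩, hun⟩
        · obtain ⟨u, huC, hun⟩ := hskew1 x ⟨w, hw3⟩ hadj
          exact ⟨Sum.inl u, huC, hun⟩
      · by_cases hw2 : w ∈ S2
        · have hxB : x ∈ B := by
            by_contra hxB
            have h1 : (g x).val ∉ S2 ∪ S3 := by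
              rintro (h | h)
              · exact (g x).prop h
              · exact hxB h
            exact h1 (hclosed w (Or.inl hw2) _ hadj.symm)
          obtain ⟨u, huA, hun⟩ := hskewA w hw2
          exact ⟨Sum.inl u, ⟨huA, hxB⟩, hun⟩
        · obtain ⟨u, huC, hun⟩ := hskew2 x ⟨w, hw2⟩ hadj
          exact ⟨Sum.inr u, huC, hun⟩
  · -- axiomatic classes
    rintro (v | v)
    · rw [colourClass_inl]
      exact axclass_map Sum.inl (fun _ _ h => Sum.inl.inj h) (fun x => rfl) (hax1 v)
    · rw [colourClass_inr]
      exact axclass_map Sum.inr (fun _ _ h => Sum.inr.inj h) (fun x => rfl) (hax2 v)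

end Combine


/-- Base case: an edgeless true proposition has a combinatorial proof. -/
lemma base_case {ν : Type} (P : LabGraph ν)
    (hnoedge : ∀ u v : P.V, ¬ P.G.Adj u v) (hne : Nonempty P.V) (ht : P.IsTrue) :
    ∃ (U : Type) (_ : Fintype U) (C : SimpleGraph U) (sim : U → U → Prop)
      (h : U → P.V), IsCombProof C sim P h := by
  have hcl : IsClause P.G Set.univ := by
    refine ⟨fun _ _ => trivial, fun v _ w _ => hnoedge v w, ?_⟩
    intro W' _ _ hsub
    exact Set.eq_univ_of_univ_subset hsub
  rcases ht Set.univ hcl with ⟨t, _, htru⟩ | ⟨u, _, v, _, hdual⟩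
  · refine ⟨PUnit, inferInstance, ⊥, fun _ _ => True, fun _ => t, ?_, ?_, ?_, ?_⟩
    · refine ⟨⟨PUnit.unit⟩, ?_⟩
      intro a b c d hab _ _ _ _ _ _
      exact hab (Subsingleton.elim a b)
    · refine ⟨⟨⟨fun _ => trivial, fun _ => trivial, fun _ _ => trivial⟩, ?_⟩, ?_, ?_⟩
      · intro a b _ hadj
        exact hadj
      · intro v a _ b _ c _
        exact Or.inl (Subsingleton.elim a b)
      · rintro W _ ⟨hne', hmat⟩
        obtain ⟨w, hw⟩ := hne'
        obtain ⟨w', ⟨_, hadj⟩, _⟩ := hmat w hw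
        exact hadj
    · refine ⟨fun a b h => h.elim, ?_⟩
      intro v w hadj
      exact absurd hadj (hnoedge _ _)
    · intro v
      refine Or.inl ⟨PUnit.unit, ?_, htru⟩
      ext x
      exact ⟨fun _ => Subsingleton.elim x PUnit.unit, fun _ => trivial⟩
  · have huv : u ≠ v := by
      rintro rfl
      rcases hdual with ⟨p, ⟨h1, h2⟩ | ⟨h1, h2⟩⟩ <;> (rw [h1] at h2; cases h2)
    refine ⟨Bool, inferInstance, ⊥, fun _ _ => True, fun b => cond b v u, ?_, ?_, ?_, ?_⟩
    · refine ⟨⟨false⟩, ?_⟩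
      intro a b c d hab hac _ hbc _ _ _
      rcases a <;> rcases b <;> rcases c <;>
        first | exact hab rfl | exact hac rfl | exact hbc rfl
    · refine ⟨⟨⟨fun _ => trivial, fun _ => trivial, fun _ _ => trivial⟩, ?_⟩, ?_, ?_⟩
      · intro a b _ hadj
        exact hadj
      · intro w a _ b _ c _
        rcases a <;> rcases b <;>
          first
            | exact Or.inl rfl
            | rcases c <;>
                first
                  | exact Or.inr (Or.inl rfl)
                  | exact Or.inr (Or.inr rfl)
      · rintro W _ ⟨hne', hmat⟩
        obtain ⟨w, hw⟩ := hne'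
        obtain ⟨w', ⟨_, hadj⟩, _⟩ := hmat w hw
        exact hadj
    · refine ⟨fun a b h => h.elim, ?_⟩
      intro w x hadj
      exact absurd hadj (hnoedge _ _)
    · intro w
      refine Or.inr ⟨false, true, fun h => Bool.noConfusion h, ?_, hdual⟩
      ext x
      refine ⟨fun _ => ?_, fun _ => trivial⟩
      rcases x
      · exact Or.inl rfl
      · exact Or.inr rfl

/-- **Combinatorial completeness**: every true combinatorial proposition has a
combinatorial proof. -/
theorem combinatorial_completeness (ν : Type) (P : LabGraph ν) [Fintype P.V]
    (hP : IsCograph P.G) (ht : P.IsTrue) :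
    ∃ (U : Type) (_ : Fintype U) (C : SimpleGraph U) (sim : U → U → Prop)
      (h : U → P.V), IsCombProof C sim P h := by
  classical
  suffices H : ∀ (n : ℕ) (Q : LabGraph ν) (iQ : Fintype Q.V), Fintype.card Q.V ≤ n →
      IsCograph Q.G → Q.IsTrue →
      ∃ (U : Type) (_ : Fintype U) (C : SimpleGraph U) (sim : U → U → Prop)
        (h : U → Q.V), IsCombProof C sim Q h by
    exact H (Fintype.card P.V) P inferInstance le_rfl hP ht
  intro n
  induction n with
  | zero =>
    intro Q iQ hcard hQ _
    have : 0 < Fintype.card Q.V := @Fintype.card_pos _ iQ hQ.1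
    omega
  | succ n ih =>
    intro Q iQ hcard hQ htQ
    letI := iQ
    by_cases hE : ∃ u v, Q.G.Adj u v
    · obtain ⟨u, v, huv⟩ := hE
      obtain ⟨S2, S3, hne2, hne3, hdis, hcomp, hclosed⟩ := decomp hQ.2 huv
      have hclosed' : ∀ x ∈ S3 ∪ S2, ∀ y, Q.G.Adj x y → y ∈ S3 ∪ S2 := by
        intro x hx y hxy
        have hx' : x ∈ S2 ∪ S3 := by
          rcases hx with h | h
          · exact Or.inr h
          · exact Or.inl h
        rcases hclosed x hx' y hxy with h | h
        · exact Or.inr h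
        · exact Or.inl h
      have hcomp' : ∀ x ∈ S3, ∀ y ∈ S2, Q.G.Adj x y := fun x hx y hy => (hcomp y hy x hx).symm
      have hT2 : (Q.restrict S3ᶜ).IsTrue := isTrue_restrict htQ hne2 hdis hcomp hclosed
      have hT3 : (Q.restrict S2ᶜ).IsTrue := isTrue_restrict htQ hne3 hdis.symm hcomp' hclosed'
      have hC2 : IsCograph (Q.restrict S3ᶜ).G :=
        isCograph_restrict hQ ⟨hne2.choose, fun h => Set.disjoint_left.mp hdis hne2.choose_spec h⟩
      have hC3 : IsCograph (Q.restrict S2ᶜ).G :=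
        isCograph_restrict hQ ⟨hne3.choose, fun h => Set.disjoint_left.mp hdis h hne3.choose_spec⟩
      have hcardaux : ∀ (S : Set Q.V) (x : Q.V), x ∉ S →
          ∀ (j : Fintype ↥S), @Fintype.card ↥S j ≤ n := by
        intro S x hx j
        have hlt : S.ncard < (Set.univ : Set Q.V).ncard := by
          apply Set.ncard_lt_ncard ?_ (Set.toFinite _)
          constructor
          · exact Set.subset_univ _
          · intro hsub
            exact hx (hsub (Set.mem_univ x))
        rw [Set.ncard_univ] at hlt
        have h2 : @Fintype.card ↥S j = S.ncard := by
          rw [← Nat.card_coe_set_eq, Nat.card_eq_fintype_card]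
        have h3 : Nat.card Q.V = Fintype.card Q.V := Nat.card_eq_fintype_card
        omega
      have hcard2 := hcardaux (S3ᶜ) hne3.choose (fun h => h hne3.choose_spec) ((Set.toFinite (S3ᶜ)).fintype)
      have hcard3 := hcardaux (S2ᶜ) hne2.choose (fun h => h hne2.choose_spec) ((Set.toFinite (S2ᶜ)).fintype)
      obtain ⟨U1, FU1, C1, sim1, f, h1⟩ := ih (Q.restrict S3ᶜ) (Set.toFinite (S3ᶜ)).fintype hcard2 hC2 hT2
      obtain ⟨U2, FU2, C2, sim2, g, h2⟩ := ih (Q.restrict S2ᶜ) (Set.toFinite (S2ᶜ)).fintype hcard3 hC3 hT3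
      letI := FU1
      letI := FU2
      exact combine hdis hcomp hclosed h1 h2
    · push_neg at hE
      exact base_case Q hE hQ.1 htQ

end CombinatorialProofs
end

section
/- A proposition φ is true (evaluates to 1 under every valuation) if and only if its graph G(φ) is true (every clause of G(φ) is true). -/
namespace CombinatorialProofs

section Aux

variable {ν : Type}

/-- Boolean evaluation of an atom under a valuation. -/
def atomEval (f : ν → Bool) : Atom ν → Bool
  | .pos p => f p
  | .neg p => !(f p)
  | .tru   => true
  | .fls   => false

lemma atomEval_dual (f : ν → Bool) (a : Atom ν) :
    atomEval f a.dual = !(atomEval f a) := by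
  cases a <;> simp [Atom.dual, atomEval]

/-- Every clause contains a vertex whose label evaluates to true under `f`. -/
def OK (f : ν → Bool) (A : LabGraph ν) : Prop :=
  ∀ W : Set A.V, IsClause A.G W → ∃ v ∈ W, atomEval f (A.label v) = true

lemma LabGraph.neg_neg (A : LabGraph ν) : A.neg.neg = A := by
  obtain ⟨V, G, l⟩ := A
  have h1 : Gᶜᶜ = G := compl_compl G
  have h2 : (fun v => ((l v).dual).dual) = l := by
    funext v; cases l v <;> rfl
  simp only [LabGraph.neg]
  show (⟨V, Gᶜᶜ, fun v => ((l v).dual).dual⟩ : LabGraph ν) = ⟨V, G, l⟩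
  rw [h1, h2]

lemma union_neg (A B : LabGraph ν) : (A.union B).neg = A.neg.join B.neg := by
  obtain ⟨V₁, G₁, l₁⟩ := A
  obtain ⟨V₂, G₂, l₂⟩ := B
  simp only [LabGraph.union, LabGraph.neg, LabGraph.join]
  congr 1
  · ext v w
    show (sumUnion G₁ G₂)ᶜ.Adj v w ↔ (sumJoin G₁ᶜ G₂ᶜ).Adj v w
    rcases v with a | a <;> rcases w with b | b <;>
      simp [sumUnion, sumJoin, SimpleGraph.compl_adj]
  · funext v; rcases v with a | a <;> rfl

lemma join_neg (A B : LabGraph ν) : (A.join B).neg = A.neg.union B.neg := by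
  obtain ⟨V₁, G₁, l₁⟩ := A
  obtain ⟨V₂, G₂, l₂⟩ := B
  simp only [LabGraph.union, LabGraph.neg, LabGraph.join]
  congr 1
  · ext v w
    show (sumJoin G₁ G₂)ᶜ.Adj v w ↔ (sumUnion G₁ᶜ G₂ᶜ).Adj v w
    rcases v with a | a <;> rcases w with b | b <;>
      simp [sumUnion, sumJoin, SimpleGraph.compl_adj]
  · funext v; rcases v with a | a <;> rfl

lemma clause_nonempty {V : Type} [Nonempty V] {G : SimpleGraph V} {W : Set V}
    (h : IsClause G W) : W.Nonempty := by
  by_contra he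
  rw [Set.not_nonempty_iff_eq_empty] at he
  obtain ⟨v⟩ := ‹Nonempty V›
  have hs : IsStable G {v} := by
    intro a ha b hb hab
    simp only [Set.mem_singleton_iff] at ha hb
    subst ha; subst hb; exact G.irrefl hab
  have := h.2.2 {v} (Set.subset_univ _) hs (by simp [he])
  rw [he] at this
  exact Set.singleton_ne_empty v this

lemma isClause_punit (G : SimpleGraph PUnit) (W : Set PUnit) :
    IsClause G W ↔ W = Set.univ := by
  constructor
  · intro h
    have := h.2.2 Set.univ (subset_refl _)
      (fun a _ b _ hab => by cases a; cases b; exact G.irrefl hab)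
      (Set.subset_univ _)
    exact this.symm
  · rintro rfl
    refine ⟨subset_refl _, fun a _ b _ hab => by cases a; cases b; exact G.irrefl hab,
      fun W' h1 _ h3 => Set.univ_subset_iff.mp h3⟩

lemma ok_punit (f : ν → Bool) (G : SimpleGraph PUnit) (l : PUnit → Atom ν) :
    OK f ⟨PUnit, G, l⟩ ↔ atomEval f (l PUnit.unit) = true := by
  constructor
  · intro h
    obtain ⟨v, _, hv⟩ := h Set.univ ((isClause_punit G _).2 rfl)
    cases v; exact hv
  · intro h W hW
    rw [isClause_punit] at hW
    exact ⟨PUnit.unit, hW ▸ Set.mem_univ _, h⟩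

lemma ok_ofAtom (f : ν → Bool) (a : Atom ν) :
    OK f (LabGraph.ofAtom a) ↔ atomEval f a = true :=
  ok_punit f ⊥ (fun _ => a)

lemma ok_ofAtom_neg (f : ν → Bool) (a : Atom ν) :
    OK f (LabGraph.ofAtom a).neg ↔ atomEval f a = false := by
  rw [show (LabGraph.ofAtom a).neg = (⟨PUnit, ⊥ᶜ, fun _ => a.dual⟩ : LabGraph ν) from rfl,
    ok_punit, atomEval_dual]
  cases atomEval f a <;> simp

lemma isClause_sumUnion {V₁ V₂ : Type} (G₁ : SimpleGraph V₁) (G₂ : SimpleGraph V₂)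
    (W : Set (V₁ ⊕ V₂)) :
    IsClause (sumUnion G₁ G₂) W ↔
      IsClause G₁ (Sum.inl ⁻¹' W) ∧ IsClause G₂ (Sum.inr ⁻¹' W) := by
  constructor
  · rintro ⟨-, hst, hmax⟩
    refine ⟨⟨Set.subset_univ _, fun a ha b hb hab => hst _ ha _ hb hab, ?_⟩,
      ⟨Set.subset_univ _, fun a ha b hb hab => hst _ ha _ hb hab, ?_⟩⟩
    · intro W₁' _ hs hsub
      set W' : Set (V₁ ⊕ V₂) := {x | Sum.elim (· ∈ W₁') (fun b => Sum.inr b ∈ W) x} with hW'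
      have hstable : IsStable (sumUnion G₁ G₂) W' := by
        rintro (a | a) ha (b | b) hb hab
        · exact hs a ha b hb hab
        · exact hab
        · exact hab
        · exact hst _ ha _ hb hab
      have hsub2 : W ⊆ W' := by
        rintro (a | a) ha
        · exact hsub ha
        · exact ha
      have heq := hmax W' (Set.subset_univ _) hstable hsub2
      ext a
      constructor
      · intro ha
        have h2 : Sum.inl a ∈ W' := ha
        rw [heq] at h2; exact h2
      · intro ha; exact hsub ha
    · intro W₂' _ hs hsub
      set W' : Set (V₁ ⊕ V₂) := {x | Sum.elim (fun a => Sum.inl a ∈ W) (· ∈ W₂') x} with hW'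
      have hstable : IsStable (sumUnion G₁ G₂) W' := by
        rintro (a | a) ha (b | b) hb hab
        · exact hst _ ha _ hb hab
        · exact hab
        · exact hab
        · exact hs a ha b hb hab
      have hsub2 : W ⊆ W' := by
        rintro (a | a) ha
        · exact ha
        · exact hsub ha
      have heq := hmax W' (Set.subset_univ _) hstable hsub2
      ext a
      constructor
      · intro ha
        have h2 : Sum.inr a ∈ W' := ha
        rw [heq] at h2; exact h2
      · intro ha; exact hsub ha
  · rintro ⟨⟨-, hs1, hm1⟩, ⟨-, hs2, hm2⟩⟩
    refine ⟨Set.subset_univ _, ?_, ?_⟩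
    · rintro (a | a) ha (b | b) hb hab
      · exact hs1 a ha b hb hab
      · exact hab
      · exact hab
      · exact hs2 a ha b hb hab
    · intro W' _ hs hsub
      have h1 := hm1 (Sum.inl ⁻¹' W') (Set.subset_univ _)
        (fun a ha b hb hab => hs _ ha _ hb hab)
        (fun a ha => hsub ha)
      have h2 := hm2 (Sum.inr ⁻¹' W') (Set.subset_univ _)
        (fun a ha b hb hab => hs _ ha _ hb hab)
        (fun a ha => hsub ha)
      ext x
      rcases x with a | a
      · exact Set.ext_iff.1 h1 a
      · exact Set.ext_iff.1 h2 a

lemma isClause_sumJoin {V₁ V₂ : Type} [Nonempty V₁] [Nonempty V₂]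
    (G₁ : SimpleGraph V₁) (G₂ : SimpleGraph V₂) (W : Set (V₁ ⊕ V₂)) :
    IsClause (sumJoin G₁ G₂) W ↔
      (IsClause G₁ (Sum.inl ⁻¹' W) ∧ Sum.inr ⁻¹' W = ∅) ∨
      (Sum.inl ⁻¹' W = ∅ ∧ IsClause G₂ (Sum.inr ⁻¹' W)) := by
  constructor
  · intro h
    obtain ⟨-, hst, hmax⟩ := h
    obtain ⟨x, hx⟩ := clause_nonempty (V := V₁ ⊕ V₂) ⟨Set.subset_univ _, hst, hmax⟩
    rcases x with a₀ | a₀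
    · left
      have hemp : Sum.inr ⁻¹' W = ∅ := by
        ext b
        simp only [Set.mem_preimage, Set.mem_empty_iff_false, iff_false]
        intro hb
        exact hst _ hx _ hb trivial
      refine ⟨⟨Set.subset_univ _, fun a ha b hb hab => hst _ ha _ hb hab, ?_⟩, hemp⟩
      intro W₁' _ hs hsub
      set W' : Set (V₁ ⊕ V₂) := {x | Sum.elim (· ∈ W₁') (fun _ => False) x} with hW'
      have hstable : IsStable (sumJoin G₁ G₂) W' := by
        rintro (a | a) ha (b | b) hb hab
        · exact hs a ha b hb hab
        · exact hb
        · exact ha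
        · exact ha
      have hsub2 : W ⊆ W' := by
        rintro (a | a) ha
        · exact hsub ha
        · have : a ∈ Sum.inr ⁻¹' W := ha
          rw [hemp] at this; exact this.elim
      have heq := hmax W' (Set.subset_univ _) hstable hsub2
      ext a
      constructor
      · intro ha
        have h2 : Sum.inl a ∈ W' := ha
        rw [heq] at h2; exact h2
      · intro ha; exact hsub ha
    · right
      have hemp : Sum.inl ⁻¹' W = ∅ := by
        ext b
        simp only [Set.mem_preimage, Set.mem_empty_iff_false, iff_false]
        intro hb
        exact hst _ hx _ hb trivial
      refine ⟨hemp, ⟨Set.subset_univ _, fun a ha b hb hab => hst _ ha _ hb hab, ?_⟩⟩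
      intro W₂' _ hs hsub
      set W' : Set (V₁ ⊕ V₂) := {x | Sum.elim (fun _ => False) (· ∈ W₂') x} with hW'
      have hstable : IsStable (sumJoin G₁ G₂) W' := by
        rintro (a | a) ha (b | b) hb hab
        · exact ha
        · exact ha
        · exact hb
        · exact hs a ha b hb hab
      have hsub2 : W ⊆ W' := by
        rintro (a | a) ha
        · have : a ∈ Sum.inl ⁻¹' W := ha
          rw [hemp] at this; exact this.elim
        · exact hsub ha
      have heq := hmax W' (Set.subset_univ _) hstable hsub2
      ext a
      constructor
      · intro ha
        have h2 : Sum.inr a ∈ W' := ha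
        rw [heq] at h2; exact h2
      · intro ha; exact hsub ha
  · rintro (⟨h1, h2⟩ | ⟨h2, h1⟩)
    · obtain ⟨a₀, ha₀⟩ := clause_nonempty h1
      refine ⟨Set.subset_univ _, ?_, ?_⟩
      · rintro (a | a) ha (b | b) hb hab
        · exact h1.2.1 a ha b hb hab
        · have : b ∈ Sum.inr ⁻¹' W := hb
          rw [h2] at this; exact this
        · have : a ∈ Sum.inr ⁻¹' W := ha
          rw [h2] at this; exact this
        · have : a ∈ Sum.inr ⁻¹' W := ha
          rw [h2] at this; exact this
      · intro W' _ hs hsub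
        have hr : Sum.inr ⁻¹' W' = ∅ := by
          ext b
          simp only [Set.mem_preimage, Set.mem_empty_iff_false, iff_false]
          intro hb
          exact hs _ (hsub ha₀) _ hb trivial
        have hl := h1.2.2 (Sum.inl ⁻¹' W') (Set.subset_univ _)
          (fun a ha b hb hab => hs _ ha _ hb hab)
          (fun a ha => hsub ha)
        ext x
        rcases x with a | a
        · exact Set.ext_iff.1 hl a
        · constructor
          · intro ha
            have : a ∈ Sum.inr ⁻¹' W' := ha
            rw [hr] at this; exact this.elim
          · intro ha
            have : a ∈ Sum.inr ⁻¹' W := ha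
            rw [h2] at this; exact this.elim
    · obtain ⟨a₀, ha₀⟩ := clause_nonempty h1
      refine ⟨Set.subset_univ _, ?_, ?_⟩
      · rintro (a | a) ha (b | b) hb hab
        · have : a ∈ Sum.inl ⁻¹' W := ha
          rw [h2] at this; exact this
        · have : a ∈ Sum.inl ⁻¹' W := ha
          rw [h2] at this; exact this
        · have : b ∈ Sum.inl ⁻¹' W := hb
          rw [h2] at this; exact this
        · exact h1.2.1 a ha b hb hab
      · intro W' _ hs hsub
        have hr : Sum.inl ⁻¹' W' = ∅ := by
          ext b
          simp only [Set.mem_preimage, Set.mem_empty_iff_false, iff_false]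
          intro hb
          exact hs _ (hsub ha₀) _ hb trivial
        have hl := h1.2.2 (Sum.inr ⁻¹' W') (Set.subset_univ _)
          (fun a ha b hb hab => hs _ ha _ hb hab)
          (fun a ha => hsub ha)
        ext x
        rcases x with a | a
        · constructor
          · intro ha
            have : a ∈ Sum.inl ⁻¹' W' := ha
            rw [hr] at this; exact this.elim
          · intro ha
            have : a ∈ Sum.inl ⁻¹' W := ha
            rw [h2] at this; exact this.elim
        · exact Set.ext_iff.1 hl a

lemma ok_union (f : ν → Bool) (A B : LabGraph ν) :
    OK f (A.union B) ↔ OK f A ∨ OK f B := by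
  constructor
  · intro h
    by_contra hc
    push_neg at hc
    obtain ⟨hA, hB⟩ := hc
    simp only [OK, not_forall] at hA hB
    push_neg at hA hB
    obtain ⟨W₁, hc₁, hv₁⟩ := hA
    obtain ⟨W₂, hc₂, hv₂⟩ := hB
    obtain ⟨v, hv, hval⟩ := h {x | Sum.elim (· ∈ W₁) (· ∈ W₂) x}
      ((isClause_sumUnion A.G B.G _).2 ⟨hc₁, hc₂⟩)
    rcases v with a | a
    · exact hv₁ a hv hval
    · exact hv₂ a hv hval
  · rintro (h | h) W hW <;>
      [obtain ⟨v, hv, hval⟩ := h _ ((isClause_sumUnion A.G B.G W).1 hW).1;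
       obtain ⟨v, hv, hval⟩ := h _ ((isClause_sumUnion A.G B.G W).1 hW).2]
    · exact ⟨Sum.inl v, hv, hval⟩
    · exact ⟨Sum.inr v, hv, hval⟩

lemma ok_join (f : ν → Bool) (A B : LabGraph ν) [Nonempty A.V] [Nonempty B.V] :
    OK f (A.join B) ↔ OK f A ∧ OK f B := by
  constructor
  · intro h
    constructor
    · intro W₁ hW₁
      obtain ⟨v, hv, hval⟩ := h {x | Sum.elim (· ∈ W₁) (fun _ => False) x}
        ((isClause_sumJoin A.G B.G _).2 (Or.inl ⟨hW₁, rfl⟩))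
      rcases v with a | a
      · exact ⟨a, hv, hval⟩
      · exact hv.elim
    · intro W₂ hW₂
      obtain ⟨v, hv, hval⟩ := h {x | Sum.elim (fun _ => False) (· ∈ W₂) x}
        ((isClause_sumJoin A.G B.G _).2 (Or.inr ⟨rfl, hW₂⟩))
      rcases v with a | a
      · exact hv.elim
      · exact ⟨a, hv, hval⟩
  · rintro ⟨hA, hB⟩ W hW
    rcases (isClause_sumJoin A.G B.G W).1 hW with ⟨h1, -⟩ | ⟨-, h1⟩
    · obtain ⟨v, hv, hval⟩ := hA _ h1
      exact ⟨Sum.inl v, hv, hval⟩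
    · obtain ⟨v, hv, hval⟩ := hB _ h1
      exact ⟨Sum.inr v, hv, hval⟩

lemma graph_nonempty (φ : Form ν) : Nonempty φ.graph.V := by
  induction φ with
  | var p => exact ⟨PUnit.unit⟩
  | tru => exact ⟨PUnit.unit⟩
  | fls => exact ⟨PUnit.unit⟩
  | not φ ih => exact ih
  | and φ ρ ih1 ih2 => obtain ⟨v⟩ := ih1; exact ⟨Sum.inl v⟩
  | or φ ρ ih1 ih2 => obtain ⟨v⟩ := ih1; exact ⟨Sum.inl v⟩
  | imp φ ρ ih1 ih2 => obtain ⟨v⟩ := ih1; exact ⟨Sum.inl v⟩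

lemma eval_iff_ok (φ : Form ν) (f : ν → Bool) :
    (φ.eval f = true ↔ OK f φ.graph) ∧ (φ.eval f = false ↔ OK f φ.graph.neg) := by
  induction φ with
  | var p =>
      constructor
      · rw [show (Form.var p).graph = LabGraph.ofAtom (Atom.pos p) from rfl, ok_ofAtom]
        exact Iff.rfl
      · rw [show (Form.var p).graph = LabGraph.ofAtom (Atom.pos p) from rfl, ok_ofAtom_neg]
        exact Iff.rfl
  | tru =>
      constructor
      · rw [show (Form.tru : Form ν).graph = LabGraph.ofAtom Atom.tru from rfl, ok_ofAtom]
        exact Iff.rfl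
      · rw [show (Form.tru : Form ν).graph = LabGraph.ofAtom Atom.tru from rfl, ok_ofAtom_neg]
        exact Iff.rfl
  | fls =>
      constructor
      · rw [show (Form.fls : Form ν).graph = LabGraph.ofAtom Atom.fls from rfl, ok_ofAtom]
        exact Iff.rfl
      · rw [show (Form.fls : Form ν).graph = LabGraph.ofAtom Atom.fls from rfl, ok_ofAtom_neg]
        exact Iff.rfl
  | not φ ih =>
      constructor
      · rw [show (Form.not φ).eval f = !(φ.eval f) from rfl,
          show (Form.not φ).graph = φ.graph.neg from rfl, Bool.not_eq_true']
        exact ih.2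
      · rw [show (Form.not φ).eval f = !(φ.eval f) from rfl,
          show (Form.not φ).graph = φ.graph.neg from rfl, Bool.not_eq_false',
          LabGraph.neg_neg φ.graph]
        exact ih.1
  | and φ ρ ihφ ihρ =>
      haveI := graph_nonempty φ
      haveI := graph_nonempty ρ
      constructor
      · rw [show (Form.and φ ρ).eval f = (φ.eval f && ρ.eval f) from rfl,
          show (Form.and φ ρ).graph = φ.graph.join ρ.graph from rfl,
          ok_join, ← ihφ.1, ← ihρ.1]
        cases φ.eval f <;> cases ρ.eval f <;> simp
      · rw [show (Form.and φ ρ).eval f = (φ.eval f && ρ.eval f) from rfl,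
          show (Form.and φ ρ).graph = φ.graph.join ρ.graph from rfl,
          join_neg, ok_union, ← ihφ.2, ← ihρ.2]
        cases φ.eval f <;> cases ρ.eval f <;> simp
  | or φ ρ ihφ ihρ =>
      haveI := graph_nonempty φ
      haveI := graph_nonempty ρ
      haveI : Nonempty (Form.graph φ).neg.V := graph_nonempty φ
      haveI : Nonempty (Form.graph ρ).neg.V := graph_nonempty ρ
      constructor
      · rw [show (Form.or φ ρ).eval f = (φ.eval f || ρ.eval f) from rfl,
          show (Form.or φ ρ).graph = φ.graph.union ρ.graph from rfl,
          ok_union, ← ihφ.1, ← ihρ.1]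
        cases φ.eval f <;> cases ρ.eval f <;> simp
      · rw [show (Form.or φ ρ).eval f = (φ.eval f || ρ.eval f) from rfl,
          show (Form.or φ ρ).graph = φ.graph.union ρ.graph from rfl,
          union_neg, ok_join, ← ihφ.2, ← ihρ.2]
        cases φ.eval f <;> cases ρ.eval f <;> simp
  | imp φ ρ ihφ ihρ =>
      haveI := graph_nonempty φ
      haveI := graph_nonempty ρ
      haveI : Nonempty (Form.graph φ).neg.V := graph_nonempty φ
      haveI : Nonempty (Form.graph ρ).neg.V := graph_nonempty ρ
      constructor
      · rw [show (Form.imp φ ρ).eval f = (!(φ.eval f) || ρ.eval f) from rfl,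
          show (Form.imp φ ρ).graph = φ.graph.neg.union ρ.graph from rfl,
          ok_union, ← ihφ.2, ← ihρ.1]
        cases φ.eval f <;> cases ρ.eval f <;> simp
      · rw [show (Form.imp φ ρ).eval f = (!(φ.eval f) || ρ.eval f) from rfl,
          show (Form.imp φ ρ).graph = φ.graph.neg.union ρ.graph from rfl,
          union_neg, LabGraph.neg_neg φ.graph, ok_join, ← ihφ.1, ← ihρ.2]
        cases φ.eval f <;> cases ρ.eval f <;> simp

end Aux

/-- A proposition `φ` is true (evaluates to `1` under every valuation) iff its graph
`G(φ)` is true (every clause of `G(φ)` is true). -/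
theorem valid_iff_graph_true (ν : Type) (φ : Form ν) :
    φ.Valid ↔ (Form.graph φ).IsTrue := by
  classical
  constructor
  · intro hv W hW
    by_contra hct
    simp only [ClauseTrue, not_or] at hct
    push_neg at hct
    obtain ⟨h1, h2⟩ := hct
    set f : ν → Bool := fun p => decide (∃ w ∈ W, (Form.graph φ).label w = Atom.neg p)
      with hf
    obtain ⟨v, hvW, hval⟩ := (eval_iff_ok φ f).1.mp (hv f) W hW
    cases hl : (Form.graph φ).label v with
    | tru => exact h1 v hvW hl
    | fls => rw [hl] at hval; exact Bool.noConfusion hval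
    | pos p =>
        rw [hl] at hval
        have hfp : f p = true := hval
        rw [hf] at hfp
        simp only [decide_eq_true_eq] at hfp
        obtain ⟨w, hwW, hw⟩ := hfp
        exact h2 v hvW w hwW ⟨p, Or.inl ⟨hl, hw⟩⟩
    | neg p =>
        rw [hl] at hval
        have hfp : f p = false := by
          cases hfp' : f p
          · rfl
          · rw [show atomEval f (Atom.neg p) = !(f p) from rfl, hfp'] at hval
            exact Bool.noConfusion hval
        have h3 : f p = true := by
          rw [hf]
          simp only [decide_eq_true_eq]
          exact ⟨v, hvW, hl⟩
        rw [h3] at hfp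
        exact Bool.noConfusion hfp
  · intro hg f
    apply (eval_iff_ok φ f).1.mpr
    intro W hW
    rcases hg W hW with ⟨v, hv, hl⟩ | ⟨v, hv, w, hw, hd⟩
    · exact ⟨v, hv, by rw [hl]; rfl⟩
    · obtain ⟨p, hp | hp⟩ := hd
      · by_cases hfp : f p = true
        · exact ⟨v, hv, by rw [hp.1]; exact hfp⟩
        · refine ⟨w, hw, ?_⟩
          rw [hp.2]
          show (!(f p)) = true
          rw [Bool.eq_false_iff.mpr hfp]
          rfl
      · by_cases hfp : f p = true
        · exact ⟨w, hw, by rw [hp.2]; exact hfp⟩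
        · refine ⟨v, hv, ?_⟩
          rw [hp.1]
          show (!(f p)) = true
          rw [Bool.eq_false_iff.mpr hfp]
          rfl

end CombinatorialProofs
end

section
/- Let ◇ ∈ {∧,∨}. If h:G→H₁◇H₂ is a skew fibration of graphs, then both restrictions h|_{H₁} : h⁻¹(H₁)→H₁ and h|_{H₂} : h⁻¹(H₂)→H₂ are skew fibrations. -/
namespace CombinatorialProofs

/-- Let `◇ ∈ {∧, ∨}`. If `h : G → H₁ ◇ H₂` is a skew fibration, then both restrictions
`h|_{H₁} : h⁻¹(H₁) → H₁` and `h|_{H₂} : h⁻¹(H₂) → H₂` are skew fibrations. -/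
theorem restriction_skewFib {U V₁ V₂ : Type} [Fintype U] [Fintype V₁] [Fintype V₂]
    (G : SimpleGraph U) (H₁ : SimpleGraph V₁) (H₂ : SimpleGraph V₂)
    (K : SimpleGraph (V₁ ⊕ V₂)) (hK : K = sumUnion H₁ H₂ ∨ K = sumJoin H₁ H₂)
    (h : U → V₁ ⊕ V₂) (hsf : IsSkewFib G K h) :
    IsSkewFib (G.induce {u : U | (h u).isLeft = true}) H₁
      (fun u => (h u.1).getLeft u.2) ∧
    IsSkewFib (G.induce {u : U | (h u).isRight = true}) H₂
      (fun u => (h u.1).getRight u.2) := by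
  obtain ⟨hhom, hfib⟩ := hsf
  have Kll : ∀ a b, K.Adj (.inl a) (.inl b) ↔ H₁.Adj a b := by
    rcases hK with rfl | rfl <;> exact fun a b => Iff.rfl
  have Krr : ∀ a b, K.Adj (.inr a) (.inr b) ↔ H₂.Adj a b := by
    rcases hK with rfl | rfl <;> exact fun a b => Iff.rfl
  -- cross-edge dichotomy: either all cross edges present (join) or none (union)
  have Kcross : (∀ a b, ¬ K.Adj (.inl a) (.inr b)) ∨ (∀ a b, K.Adj (.inl a) (.inr b)) := by
    rcases hK with rfl | rfl
    · exact Or.inl fun a b h => h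
    · exact Or.inr fun a b => trivial
  constructor
  · constructor
    · rintro ⟨u, hu⟩ ⟨v, hv⟩ hadj
      simp only [Set.mem_setOf_eq, Sum.isLeft_iff] at hu hv
      obtain ⟨a, ha⟩ := hu; obtain ⟨b, hb⟩ := hv
      have hK' := hhom u v hadj
      rw [ha, hb] at hK'
      simpa [ha, hb] using (Kll a b).mp hK'
    · rintro ⟨u, hu⟩ w hadj
      have hu' := hu
      simp only [Set.mem_setOf_eq, Sum.isLeft_iff] at hu'
      obtain ⟨a, ha⟩ := hu'
      simp only [ha, Sum.getLeft_inl] at hadj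
      have : K.Adj (h u) (.inl w) := by rw [ha]; exact (Kll a w).mpr hadj
      obtain ⟨x, hGx, hnK⟩ := hfib u (.inl w) this
      have hxl : ∃ b, h x = .inl b := by
        cases hx : h x with
        | inl b => exact ⟨b, rfl⟩
        | inr c =>
          exfalso
          rcases Kcross with hc | hc
          · have := hhom u x hGx
            rw [ha, hx] at this
            exact hc a c this
          · rw [hx] at hnK
            exact hnK ((hc w c).symm)
      obtain ⟨b, hb⟩ := hxl
      refine ⟨⟨x, by simp [Set.mem_setOf_eq, hb]⟩, ?_, ?_⟩
      · exact hGx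
      · rw [hb] at hnK
        simpa [hb] using fun hc => hnK ((Kll b w).mpr hc)
  · constructor
    · rintro ⟨u, hu⟩ ⟨v, hv⟩ hadj
      simp only [Set.mem_setOf_eq, Sum.isRight_iff] at hu hv
      obtain ⟨a, ha⟩ := hu; obtain ⟨b, hb⟩ := hv
      have hK' := hhom u v hadj
      rw [ha, hb] at hK'
      simpa [ha, hb] using (Krr a b).mp hK'
    · rintro ⟨u, hu⟩ w hadj
      have hu' := hu
      simp only [Set.mem_setOf_eq, Sum.isRight_iff] at hu'
      obtain ⟨a, ha⟩ := hu'
      simp only [ha, Sum.getRight_inr] at hadj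
      have : K.Adj (h u) (.inr w) := by rw [ha]; exact (Krr a w).mpr hadj
      obtain ⟨x, hGx, hnK⟩ := hfib u (.inr w) this
      have hxr : ∃ b, h x = .inr b := by
        cases hx : h x with
        | inr b => exact ⟨b, rfl⟩
        | inl c =>
          exfalso
          rcases Kcross with hc | hc
          · have := hhom u x hGx
            rw [ha, hx] at this
            exact hc c a this.symm
          · rw [hx] at hnK
            exact hnK (hc c w)
      obtain ⟨b, hb⟩ := hxr
      refine ⟨⟨x, by simp [Set.mem_setOf_eq, hb]⟩, ?_, ?_⟩
      · exact hGx
      · rw [hb] at hnK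
        simpa [hb] using fun hc => hnK ((Krr b w).mpr hc)

end CombinatorialProofs
end

section
/- Let h:(G₁∧G₂)∨(H₁∨H₂) → (K₁∧K₂)∨L be a skew fibration of graphs such that h(G₁)⊆K₁, h(G₂)⊆K₂, h(H₁)⊆L and h(H₂)⊆L. Then for i=1,2 the map hᵢ:Gᵢ∨Hᵢ → Kᵢ∨L defined by hᵢ(v)=h(v) is a skew fibration. -/
namespace CombinatorialProofs

/-- Let `h : (G₁ ∧ G₂) ∨ (H₁ ∨ H₂) → (K₁ ∧ K₂) ∨ L` be a skew fibration with
`h(G₁) ⊆ K₁`, `h(G₂) ⊆ K₂`, `h(H₁) ⊆ L`, `h(H₂) ⊆ L`.  Then for `i = 1, 2` the map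
`hᵢ : Gᵢ ∨ Hᵢ → Kᵢ ∨ L` defined by `hᵢ(v) = h(v)` is a skew fibration. -/
theorem skewFib_of_join_decomposition
    {VG₁ VG₂ VH₁ VH₂ VK₁ VK₂ VL : Type}
    [Fintype VG₁] [Fintype VG₂] [Fintype VH₁] [Fintype VH₂]
    [Fintype VK₁] [Fintype VK₂] [Fintype VL]
    (G₁ : SimpleGraph VG₁) (G₂ : SimpleGraph VG₂)
    (H₁ : SimpleGraph VH₁) (H₂ : SimpleGraph VH₂)
    (K₁ : SimpleGraph VK₁) (K₂ : SimpleGraph VK₂) (L : SimpleGraph VL)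
    (h : (VG₁ ⊕ VG₂) ⊕ (VH₁ ⊕ VH₂) → (VK₁ ⊕ VK₂) ⊕ VL)
    (hsf : IsSkewFib (sumUnion (sumJoin G₁ G₂) (sumUnion H₁ H₂))
                     (sumUnion (sumJoin K₁ K₂) L) h)
    (hG₁ : ∀ a : VG₁, ∃ k : VK₁, h (.inl (.inl a)) = .inl (.inl k))
    (hG₂ : ∀ a : VG₂, ∃ k : VK₂, h (.inl (.inr a)) = .inl (.inr k))
    (hH₁ : ∀ b : VH₁, ∃ l : VL, h (.inr (.inl b)) = .inr l)
    (hH₂ : ∀ b : VH₂, ∃ l : VL, h (.inr (.inr b)) = .inr l) :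
    (∀ h₁ : VG₁ ⊕ VH₁ → VK₁ ⊕ VL,
       (∀ v : VG₁ ⊕ VH₁, Sum.map Sum.inl id (h₁ v) = h (Sum.map Sum.inl Sum.inl v)) →
       IsSkewFib (sumUnion G₁ H₁) (sumUnion K₁ L) h₁) ∧
    (∀ h₂ : VG₂ ⊕ VH₂ → VK₂ ⊕ VL,
       (∀ v : VG₂ ⊕ VH₂, Sum.map Sum.inr id (h₂ v) = h (Sum.map Sum.inr Sum.inr v)) →
       IsSkewFib (sumUnion G₂ H₂) (sumUnion K₂ L) h₂) := by
  obtain ⟨hhom, hlift⟩ := hsf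
  constructor
  · -- side 1
    intro h₁ hc
    have val₁ : ∀ (a : VG₁) (k : VK₁), h (.inl (.inl a)) = .inl (.inl k) →
        h₁ (.inl a) = .inl k := by
      intro a k hk
      have hv := hc (.inl a)
      simp only [Sum.map_inl] at hv
      rw [hk] at hv
      rcases hx : h₁ (.inl a) with k' | l <;> rw [hx] at hv <;> simp at hv
      rw [hv]
    have valH : ∀ (b : VH₁) (l : VL), h (.inr (.inl b)) = .inr l →
        h₁ (.inr b) = .inr l := by
      intro b l hl
      have hv := hc (.inr b)
      simp only [Sum.map_inr] at hv
      rw [hl] at hv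
      rcases hx : h₁ (.inr b) with k' | l' <;> rw [hx] at hv <;> simp at hv
      rw [hv]
    constructor
    · rintro (a | b) (a' | b') hadj
      · obtain ⟨k, hk⟩ := hG₁ a
        obtain ⟨k', hk'⟩ := hG₁ a'
        rw [val₁ a k hk, val₁ a' k' hk']
        have := hhom (.inl (.inl a)) (.inl (.inl a')) hadj
        rw [hk, hk'] at this
        exact this
      · exact hadj.elim
      · exact hadj.elim
      · obtain ⟨l, hl⟩ := hH₁ b
        obtain ⟨l', hl'⟩ := hH₁ b'
        rw [valH b l hl, valH b' l' hl']
        have := hhom (.inr (.inl b)) (.inr (.inl b')) hadj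
        rw [hl, hl'] at this
        exact this
    · rintro (a | b) (k' | l') hadj
      · -- v = G₁ vertex, w = K₁ vertex
        obtain ⟨k, hk⟩ := hG₁ a
        rw [val₁ a k hk] at hadj
        have hbig : (sumUnion (sumJoin K₁ K₂) L).Adj (h (.inl (.inl a))) (.inl (.inl k')) := by
          rw [hk]; exact hadj
        obtain ⟨u, hu1, hu2⟩ := hlift _ _ hbig
        rcases u with (a' | a₂) | (b' | b₂)
        · obtain ⟨k'', hk''⟩ := hG₁ a'
          rw [hk''] at hu2
          refine ⟨.inl a', hu1, ?_⟩
          rw [val₁ a' k'' hk'']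
          exact hu2
        · obtain ⟨k₂, hk₂⟩ := hG₂ a₂
          rw [hk₂] at hu2
          exact (hu2 trivial).elim
        · exact hu1.elim
        · exact hu1.elim
      · obtain ⟨k, hk⟩ := hG₁ a
        rw [val₁ a k hk] at hadj
        exact hadj.elim
      · obtain ⟨l, hl⟩ := hH₁ b
        rw [valH b l hl] at hadj
        exact hadj.elim
      · obtain ⟨l, hl⟩ := hH₁ b
        rw [valH b l hl] at hadj
        have hbig : (sumUnion (sumJoin K₁ K₂) L).Adj (h (.inr (.inl b))) (.inr l') := by
          rw [hl]; exact hadj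
        obtain ⟨u, hu1, hu2⟩ := hlift _ _ hbig
        rcases u with (a' | a₂) | (b' | b₂)
        · exact hu1.elim
        · exact hu1.elim
        · obtain ⟨l'', hl''⟩ := hH₁ b'
          rw [hl''] at hu2
          refine ⟨.inr b', hu1, ?_⟩
          rw [valH b' l'' hl'']
          exact hu2
        · exact hu1.elim
  · -- side 2
    intro h₂ hc
    have val₂ : ∀ (a : VG₂) (k : VK₂), h (.inl (.inr a)) = .inl (.inr k) →
        h₂ (.inl a) = .inl k := by
      intro a k hk
      have hv := hc (.inl a)
      simp only [Sum.map_inl] at hv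
      rw [hk] at hv
      rcases hx : h₂ (.inl a) with k' | l <;> rw [hx] at hv <;> simp at hv
      rw [hv]
    have valH : ∀ (b : VH₂) (l : VL), h (.inr (.inr b)) = .inr l →
        h₂ (.inr b) = .inr l := by
      intro b l hl
      have hv := hc (.inr b)
      simp only [Sum.map_inr] at hv
      rw [hl] at hv
      rcases hx : h₂ (.inr b) with k' | l' <;> rw [hx] at hv <;> simp at hv
      rw [hv]
    constructor
    · rintro (a | b) (a' | b') hadj
      · obtain ⟨k, hk⟩ := hG₂ a
        obtain ⟨k', hk'⟩ := hG₂ a'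
        rw [val₂ a k hk, val₂ a' k' hk']
        have := hhom (.inl (.inr a)) (.inl (.inr a')) hadj
        rw [hk, hk'] at this
        exact this
      · exact hadj.elim
      · exact hadj.elim
      · obtain ⟨l, hl⟩ := hH₂ b
        obtain ⟨l', hl'⟩ := hH₂ b'
        rw [valH b l hl, valH b' l' hl']
        have := hhom (.inr (.inr b)) (.inr (.inr b')) hadj
        rw [hl, hl'] at this
        exact this
    · rintro (a | b) (k' | l') hadj
      · obtain ⟨k, hk⟩ := hG₂ a
        rw [val₂ a k hk] at hadj
        have hbig : (sumUnion (sumJoin K₁ K₂) L).Adj (h (.inl (.inr a))) (.inl (.inr k')) := by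
          rw [hk]; exact hadj
        obtain ⟨u, hu1, hu2⟩ := hlift _ _ hbig
        rcases u with (a₁ | a') | (b₁ | b')
        · obtain ⟨k₁, hk₁⟩ := hG₁ a₁
          rw [hk₁] at hu2
          exact (hu2 trivial).elim
        · obtain ⟨k'', hk''⟩ := hG₂ a'
          rw [hk''] at hu2
          refine ⟨.inl a', hu1, ?_⟩
          rw [val₂ a' k'' hk'']
          exact hu2
        · exact hu1.elim
        · exact hu1.elim
      · obtain ⟨k, hk⟩ := hG₂ a
        rw [val₂ a k hk] at hadj
        exact hadj.elim
      · obtain ⟨l, hl⟩ := hH₂ b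
        rw [valH b l hl] at hadj
        exact hadj.elim
      · obtain ⟨l, hl⟩ := hH₂ b
        rw [valH b l hl] at hadj
        have hbig : (sumUnion (sumJoin K₁ K₂) L).Adj (h (.inr (.inr b))) (.inr l') := by
          rw [hl]; exact hadj
        obtain ⟨u, hu1, hu2⟩ := hlift _ _ hbig
        rcases u with (a₁ | a') | (b₁ | b')
        · exact hu1.elim
        · exact hu1.elim
        · exact hu1.elim
        · obtain ⟨l'', hl''⟩ := hH₂ b'
          rw [hl''] at hu2
          refine ⟨.inr b', hu1, ?_⟩
          rw [valH b' l'' hl'']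
          exact hu2


end CombinatorialProofs
end

section
/- If h:G→K is a skew fibration of graphs into a cograph K, then every clause of K contains a clause of the image h(G) (the subgraph of K induced by h(V(G))). -/
namespace CombinatorialProofs

/-- Any vertex outside a clause has a neighbour inside it. -/
lemma exists_neighbor_of_not_mem_clause {W : Type} (K : SimpleGraph W) (C : Set W)
    (hC : IsClause K C) (x : W) (hx : x ∉ C) : ∃ c ∈ C, K.Adj x c := by
  by_contra hno
  push_neg at hno
  have hstab : IsStable K (insert x C) := by
    intro a ha b hb hadj
    rcases ha with rfl | ha <;> rcases hb with rfl | hb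
    · exact K.irrefl hadj
    · exact hno b hb hadj
    · exact hno a ha hadj.symm
    · exact hC.2.1 a ha b hb hadj
  have := hC.2.2 (insert x C) (Set.subset_univ _) hstab (Set.subset_insert _ _)
  exact hx (this ▸ Set.mem_insert x C)

/-- Descent lemma: there is no vertex `v` with `h v ∉ C` having no neighbour in
`C ∩ range h`. -/
lemma no_bad_vertex {U W : Type} [Fintype W]
    (G : SimpleGraph U) (K : SimpleGraph W) (hK : IsCograph K)
    (h : U → W) (hsf : IsSkewFib G K h) (C : Set W) (hC : IsClause K C) :
    ∀ v : U, h v ∉ C → (∀ c ∈ C, c ∈ Set.range h → ¬ K.Adj (h v) c) → False := by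
  have key : ∀ n : ℕ, ∀ v : U, {c | c ∈ C ∧ K.Adj (h v) c}.ncard < n →
      h v ∉ C → (∀ c ∈ C, c ∈ Set.range h → ¬ K.Adj (h v) c) → False := by
    intro n
    induction n with
    | zero => intro v hlt; exact absurd hlt (Nat.not_lt_zero _)
    | succ n ih =>
      intro v hlt hvC hnbr
      obtain ⟨c₀, hc₀C, hc₀adj⟩ := exists_neighbor_of_not_mem_clause K C hC (h v) hvC
      obtain ⟨u, hGadj, hunadj⟩ := hsf.2 v c₀ hc₀adj
      have hKadj : K.Adj (h v) (h u) := hsf.1 v u hGadj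
      have huC : h u ∉ C := fun hmem => hnbr (h u) hmem ⟨u, rfl⟩ hKadj
      -- neighbourhoods in C are comparable since K is P4-free
      have hsubset : {c | c ∈ C ∧ K.Adj (h u) c} ⊆ {c | c ∈ C ∧ K.Adj (h v) c} := by
        rintro c' ⟨hc'C, hc'adj⟩
        refine ⟨hc'C, ?_⟩
        by_contra hvc'
        -- P4 : c₀ - h v - h u - c'
        have hne1 : c₀ ≠ h v := fun e => hvC (e ▸ hc₀C)
        have hne2 : c₀ ≠ h u := fun e => huC (e ▸ hc₀C)
        have hne3 : c₀ ≠ c' := fun e => hunadj (by rw [e]; exact hc'adj)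
        have hne4 : h v ≠ h u := K.ne_of_adj hKadj
        have hne5 : h v ≠ c' := fun e => hvC (e ▸ hc'C)
        have hne6 : h u ≠ c' := K.ne_of_adj hc'adj
        exact hK.2 c₀ (h v) (h u) c' hne1 hne2 hne3 hne4 hne5 hne6
          ⟨hc₀adj.symm, hKadj, hc'adj,
           fun a => hunadj a.symm, hvc', hC.2.1 c₀ hc₀C c' hc'C⟩
      have hssubset : {c | c ∈ C ∧ K.Adj (h u) c} ⊂ {c | c ∈ C ∧ K.Adj (h v) c} := by
        refine ⟨hsubset, fun hrev => ?_⟩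
        exact hunadj (hrev ⟨hc₀C, hc₀adj⟩).2
      have hcardlt := Set.ncard_lt_ncard hssubset (Set.toFinite _)
      have hunbr : ∀ c ∈ C, c ∈ Set.range h → ¬ K.Adj (h u) c := by
        intro c hcC hcr hadj
        exact hnbr c hcC hcr (hsubset ⟨hcC, hadj⟩).2
      exact ih u (by omega) huC hunbr
  intro v hvC hnbr
  exact key ({c | c ∈ C ∧ K.Adj (h v) c}.ncard + 1) v (Nat.lt_succ_self _) hvC hnbr

/-- If `h : G → K` is a skew fibration into a cograph `K`, then every clause of `K`
contains a clause of the image `h(G)` (the subgraph of `K` induced by `h(V(G))`). -/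
theorem clause_contains_clause_of_image {U W : Type} [Fintype U] [Fintype W]
    (G : SimpleGraph U) (K : SimpleGraph W) (hK : IsCograph K)
    (h : U → W) (hsf : IsSkewFib G K h) :
    ∀ C : Set W, IsClause K C →
      ∃ C' : Set W, IsClauseOn K (Set.range h) C' ∧ C' ⊆ C := by
  intro C hC
  refine ⟨C ∩ Set.range h,
    ⟨Set.inter_subset_right, fun v hv w hw => hC.2.1 v hv.1 w hw.1, ?_⟩,
    Set.inter_subset_left⟩
  intro W' hW'sub hW'stab hle
  by_contra hne
  obtain ⟨x, hxW', hxnot⟩ : ∃ x ∈ W', x ∉ C ∩ Set.range h := by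
    by_contra h'
    push_neg at h'
    exact hne (Set.Subset.antisymm h' hle)
  obtain ⟨v, rfl⟩ := hW'sub hxW'
  have hxC : h v ∉ C := fun hc => hxnot ⟨hc, hW'sub hxW'⟩
  have hnonbr : ∀ c ∈ C, c ∈ Set.range h → ¬ K.Adj (h v) c := by
    intro c hcC hcr hadj
    exact hW'stab _ hxW' c (hle ⟨hcC, hcr⟩) hadj
  exact no_bad_vertex G K hK h hsf C hC v hxC hnonbr

end CombinatorialProofs
end

section
/- For any combinatorial proof h:C→P of a combinatorial proposition P, there exist a combinatorial proposition P' and a shallow combinatorial proof h':C→P' such that P is true if and only if P' is true. -/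
namespace CombinatorialProofs

/-- Auxiliary: membership propagates along walks through an adjacency-closed set. -/
lemma mem_of_walk_aux {V : Type} {G : SimpleGraph V} {A : Set V}
    (hA : ∀ a ∈ A, ∀ b, G.Adj a b → b ∈ A) {a b : V} (w : G.Walk a b) (ha : a ∈ A) :
    b ∈ A := by
  induction w with
  | nil => exact ha
  | cons hadj _ ih => exact ih (hA _ ha _ hadj)

/-- Auxiliary: an adjacency-closed, pairwise-reachable set has no split. -/
lemma noSplit_of_closed_reach {V : Type} {G : SimpleGraph V} {S : Set V}
    (hcl : ∀ a ∈ S, ∀ b, G.Adj a b → b ∈ S)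
    (hrea : ∀ a ∈ S, ∀ b ∈ S, G.Reachable a b) : NoSplit G S := by
  intro A B hun hdis hno
  by_contra hcon
  push_neg at hcon
  obtain ⟨hA, hB⟩ := hcon
  obtain ⟨a, ha⟩ := hA
  obtain ⟨b, hb⟩ := hB
  have haS : a ∈ S := by rw [← hun]; exact Set.mem_union_left _ ha
  have hbS : b ∈ S := by rw [← hun]; exact Set.mem_union_right _ hb
  have hAcl : ∀ x ∈ A, ∀ y, G.Adj x y → y ∈ A := by
    intro x hx y hxy
    have hyS : y ∈ S := hcl x (by rw [← hun]; exact Set.mem_union_left _ hx) y hxy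
    have hyAB : y ∈ A ∪ B := by rw [hun]; exact hyS
    rcases hyAB with hh | hh
    · exact hh
    · exact absurd hxy (hno x hx y hh)
  obtain ⟨w⟩ := hrea a haS b hbS
  exact (Set.disjoint_left.1 hdis (mem_of_walk_aux hAcl w ha)) hb

/-- Auxiliary: a component is closed under adjacency. -/
lemma isComponent_closed {V : Type} {G : SimpleGraph V} {K : Set V}
    (hK : IsComponent G K) : ∀ x ∈ K, ∀ y, G.Adj x y → y ∈ K := by
  intro x hx y hxy
  by_contra hyK
  have hns : NoSplit G (K ∪ {y}) := by
    intro A B hun hdis hno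
    have hy : y ∈ A ∪ B := by rw [hun]; exact Set.mem_union_right _ rfl
    have key : ∀ A' B' : Set V, A' ∪ B' = K ∪ {y} → Disjoint A' B' →
        (∀ a ∈ A', ∀ b ∈ B', ¬ G.Adj a b) → y ∈ A' → B' = ∅ := by
      intro A' B' hun' hdis' hno' hyA
      have hyB : y ∉ B' := Set.disjoint_left.1 hdis' hyA
      have hsub : (A' \ {y}) ∪ B' = K := by
        ext z
        constructor
        · rintro (⟨hz, hzy⟩ | hz)
          · have : z ∈ K ∪ {y} := by rw [← hun']; exact Set.mem_union_left _ hz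
            rcases this with hh | hh
            · exact hh
            · exact absurd hh hzy
          · have : z ∈ K ∪ {y} := by rw [← hun']; exact Set.mem_union_right _ hz
            rcases this with hh | hh
            · exact hh
            · exact absurd (hh ▸ hz) hyB
        · intro hz
          have : z ∈ A' ∪ B' := by rw [hun']; exact Set.mem_union_left _ hz
          rcases this with hh | hh
          · left; exact ⟨hh, fun hzy => hyK (hzy ▸ hz)⟩
          · right; exact hh
      rcases hK.2.1 (A' \ {y}) B' hsub
          (Set.disjoint_of_subset_left Set.diff_subset hdis')
          (fun a ha b hb => hno' a ha.1 b hb) with hA0 | hB0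
      · -- A' \ {y} = ∅, so A' = {y}; but then the edge x–y crosses
        exfalso
        have hxK : x ∈ K := hx
        have hxB : x ∈ B' := by
          have : x ∈ (A' \ {y}) ∪ B' := by rw [hsub]; exact hxK
          rcases this with hh | hh
          · exact absurd hh (by rw [hA0]; exact Set.notMem_empty x)
          · exact hh
        exact hno' y hyA x hxB hxy.symm
      · exact hB0
    rcases hy with hyA | hyB
    · right; exact key A B hun hdis hno hyA
    · left; exact key B A (by rw [Set.union_comm]; exact hun) hdis.symm
        (fun a ha b hb hab => hno b hb a ha hab.symm) hyB
  have := hK.2.2 (K ∪ {y}) (Set.subset_union_left)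
    ⟨x, Set.mem_union_left _ hx⟩ hns
  exact hyK (by rw [← this]; exact Set.mem_union_right _ rfl)

/-- For any combinatorial proof `h : C → P` there exist a combinatorial proposition `P'`
and a shallow combinatorial proof `h' : C → P'` such that `P` is true iff `P'` is true. -/
theorem exists_shallow_combProof (ν : Type) (P : LabGraph ν) [Fintype P.V]
    (hP : IsCograph P.G) {U : Type} [Fintype U] (C : SimpleGraph U)
    (sim : U → U → Prop) (h : U → P.V) (hpf : IsCombProof C sim P h) :
    ∃ (P' : LabGraph ν) (_ : Fintype P'.V) (h' : U → P'.V),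
      IsCograph P'.G ∧ IsCombProof C sim P' h' ∧ IsShallow C P'.G h' ∧
      (P.IsTrue ↔ P'.IsTrue) := by
  classical
  obtain ⟨hC, hnice, ⟨hhom, hskew⟩, hax⟩ := hpf
  haveI hU : Nonempty U := hC.1
  haveI : Finite C.ConnectedComponent := Quot.finite _
  haveI : Fintype C.ConnectedComponent := Fintype.ofFinite _
  -- the new proposition: one copy of `P` for each connected component of `C`
  set G' : SimpleGraph (P.V × C.ConnectedComponent) :=
    { Adj := fun a b => a.2 = b.2 ∧ P.G.Adj a.1 b.1
      symm := ⟨fun _ _ hab => ⟨hab.1.symm, hab.2.symm⟩⟩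
      loopless := ⟨fun a hab => P.G.irrefl hab.2⟩ } with hG'
  have hG'adj : ∀ a b : P.V × C.ConnectedComponent,
      G'.Adj a b ↔ (a.2 = b.2 ∧ P.G.Adj a.1 b.1) := fun a b => Iff.rfl
  set P' : LabGraph ν := ⟨P.V × C.ConnectedComponent, G', fun a => P.label a.1⟩ with hP'
  set h' : U → P.V × C.ConnectedComponent :=
    fun u => (h u, C.connectedComponentMk u) with hh'
  have hh'hom : IsGraphHom C G' h' := by
    intro v w hvw
    exact ⟨SimpleGraph.ConnectedComponent.connectedComponentMk_eq_of_adj hvw, hhom v w hvw⟩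
  refine ⟨P', inferInstance, h', ?_, ?_, ?_, ?_⟩
  · -- `P'` is a cograph
    constructor
    · exact ⟨⟨hP.1.some, C.connectedComponentMk hU.some⟩⟩
    · intro v w x y hvw hvx hvy hwx hwy hxy
      rintro ⟨⟨hvw2, hvw1⟩, ⟨hwx2, hwx1⟩, ⟨hxy2, hxy1⟩, hnvx, hnwy, hnvy⟩
      have h2 : v.2 = x.2 := hvw2.trans hwx2
      have h2' : w.2 = y.2 := hwx2.trans hxy2
      have h2'' : v.2 = y.2 := h2.trans hxy2
      have d1 : v.1 ≠ w.1 := fun he => hvw (Prod.ext he hvw2)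
      have d2 : v.1 ≠ x.1 := fun he => hvx (Prod.ext he h2)
      have d3 : v.1 ≠ y.1 := fun he => hvy (Prod.ext he h2'')
      have d4 : w.1 ≠ x.1 := fun he => hwx (Prod.ext he hwx2)
      have d5 : w.1 ≠ y.1 := fun he => hwy (Prod.ext he h2')
      have d6 : x.1 ≠ y.1 := fun he => hxy (Prod.ext he hxy2)
      exact hP.2 v.1 w.1 x.1 y.1 d1 d2 d3 d4 d5 d6
        ⟨hvw1, hwx1, hxy1,
         fun ha => hnvx ⟨h2, ha⟩, fun ha => hnwy ⟨h2', ha⟩, fun ha => hnvy ⟨h2'', ha⟩⟩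
  · -- `h'` is a combinatorial proof of `P'`
    refine ⟨hC, hnice, ⟨hh'hom, ?_⟩, ?_⟩
    · rintro v ⟨p, c⟩ ⟨hc, hadj⟩
      obtain ⟨u, hu, hnu⟩ := hskew v p hadj
      exact ⟨u, hu, fun hcon => hnu hcon.2⟩
    · intro v
      exact hax v
  · -- `h'` is shallow
    intro K hK
    -- all vertices of `K` have the same second coordinate
    have hsnd : ∀ x ∈ K, ∀ y ∈ K, x.2 = y.2 := by
      intro x hx y hy
      by_contra hne
      have hsub : {z ∈ K | z.2 = x.2} ∪ {z ∈ K | z.2 ≠ x.2} = K := by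
        ext z; constructor
        · rintro (hz | hz) <;> exact hz.1
        · intro hz
          by_cases hc : z.2 = x.2
          · exact Or.inl ⟨hz, hc⟩
          · exact Or.inr ⟨hz, hc⟩
      rcases hK.2.1 _ _ hsub
          (by
            rw [Set.disjoint_left]
            rintro z ⟨_, hz1⟩ ⟨_, hz2⟩
            exact hz2 hz1)
          (by
            rintro a ⟨_, ha⟩ b ⟨_, hb⟩ ⟨hab, _⟩
            exact hb (hab ▸ ha)) with h0 | h0
      · exact (Set.eq_empty_iff_forall_notMem.1 h0 x ⟨hx, rfl⟩)
      · exact (Set.eq_empty_iff_forall_notMem.1 h0 y ⟨hy, fun he => hne he.symm⟩)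
    have hKcl := isComponent_closed hK
    -- the preimage is adjacency-closed in `C`
    have hcl : ∀ a ∈ h' ⁻¹' K, ∀ b, C.Adj a b → b ∈ h' ⁻¹' K := by
      intro a ha b hab
      exact hKcl (h' a) ha (h' b) (hh'hom a b hab)
    -- and pairwise reachable
    have hrea : ∀ a ∈ h' ⁻¹' K, ∀ b ∈ h' ⁻¹' K, C.Reachable a b := by
      intro a ha b hb
      have : C.connectedComponentMk a = C.connectedComponentMk b :=
        hsnd (h' a) ha (h' b) hb
      exact SimpleGraph.ConnectedComponent.exact this
    exact noSplit_of_closed_reach hcl hrea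
  · -- truth equivalence
    constructor
    · -- `P` true ⇒ `P'` true
      intro hPt W hW
      set c₀ : C.ConnectedComponent := C.connectedComponentMk hU.some with hc₀
      set Wi : Set P.V := {p | (p, c₀) ∈ W} with hWi
      have hWic : IsClause P.G Wi := by
        refine ⟨Set.subset_univ _, ?_, ?_⟩
        · intro p hp q hq hpq
          exact hW.2.1 (p, c₀) hp (q, c₀) hq ⟨rfl, hpq⟩
        · intro W' _ hW's hsub
          refine Set.Subset.antisymm ?_ hsub
          intro q hq
          have hstab : IsStable P'.G (W ∪ {(q, c₀)}) := by
            rintro a (ha | ha) b (hb | hb) hab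
            · exact hW.2.1 a ha b hb hab
            · rw [Set.mem_singleton_iff] at hb
              subst hb
              obtain ⟨h2, h1⟩ := hab
              have : a.1 ∈ Wi := by
                have : a = (a.1, c₀) := Prod.ext rfl h2
                rw [hWi]; simpa [← this]
              exact hW's a.1 (hsub this) q hq h1
            · rw [Set.mem_singleton_iff] at ha
              subst ha
              obtain ⟨h2, h1⟩ := hab
              have : b.1 ∈ Wi := by
                have : b = (b.1, c₀) := Prod.ext rfl h2.symm
                rw [hWi]; simpa [← this]
              exact hW's q hq b.1 (hsub this) h1
            · rw [Set.mem_singleton_iff] at ha hb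
              subst ha; subst hb
              exact P'.G.irrefl hab
          have := hW.2.2 (W ∪ {(q, c₀)}) (Set.subset_univ _) hstab
            Set.subset_union_left
          show (q, c₀) ∈ W
          rw [← this]
          exact Set.mem_union_right _ rfl
      rcases hPt Wi hWic with ⟨v, hv, hvt⟩ | ⟨v, hv, w, hw, hd⟩
      · exact Or.inl ⟨(v, c₀), hv, hvt⟩
      · exact Or.inr ⟨(v, c₀), hv, (w, c₀), hw, hd⟩
    · -- `P'` true ⇒ `P` true
      intro hPt W hW
      set W' : Set (P.V × C.ConnectedComponent) := {z | z.1 ∈ W} with hW'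
      have hW'c : IsClause P'.G W' := by
        refine ⟨Set.subset_univ _, ?_, ?_⟩
        · rintro a ha b hb ⟨_, hab⟩
          exact hW.2.1 a.1 ha b.1 hb hab
        · intro T _ hTs hsub
          refine Set.Subset.antisymm ?_ hsub
          rintro ⟨p, c⟩ hpc
          have hstab : IsStable P.G (W ∪ {p}) := by
            rintro a (ha | ha) b (hb | hb) hab
            · exact hW.2.1 a ha b hb hab
            · rw [Set.mem_singleton_iff] at hb; subst hb
              exact hTs (a, c) (hsub ha) (b, c) hpc ⟨rfl, hab⟩
            · rw [Set.mem_singleton_iff] at ha; subst ha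
              exact hTs (a, c) hpc (b, c) (hsub hb) ⟨rfl, hab⟩
            · rw [Set.mem_singleton_iff] at ha hb
              subst ha; subst hb
              exact P.G.irrefl hab
          have := hW.2.2 (W ∪ {p}) (Set.subset_univ _) hstab Set.subset_union_left
          show p ∈ W
          rw [← this]
          exact Set.mem_union_right _ rfl
      rcases hPt W' hW'c with ⟨v, hv, hvt⟩ | ⟨v, hv, w, hw, hd⟩
      · exact Or.inl ⟨v.1, hv, hvt⟩
      · exact Or.inr ⟨v.1, hv, w.1, hw, hd⟩

end CombinatorialProofs
end

section
/- Any fusion of two nicely coloured cographs is a nicely coloured cograph. -/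
namespace CombinatorialProofs


lemma even_card_of_pairing {α : Type*} [DecidableEq α] (s : Finset α) (f : α → α)
    (h : ∀ a ∈ s, f a ∈ s ∧ f (f a) = a ∧ f a ≠ a) : Even s.card := by
  classical
  induction s using Finset.strongInduction with
  | _ s ih =>
    rcases s.eq_empty_or_nonempty with rfl | ⟨a, ha⟩
    · simp
    · obtain ⟨hfa, hffa, hne⟩ := h a ha
      have hsubset : ({a, f a} : Finset α) ⊆ s := by
        intro x hx
        simp only [Finset.mem_insert, Finset.mem_singleton] at hx
        rcases hx with rfl | rfl
        · exact ha
        · exact hfa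
      have hss : s \ {a, f a} ⊂ s :=
        Finset.sdiff_ssubset hsubset ⟨a, by simp⟩
      have heven : Even (s \ {a, f a}).card := by
        refine ih _ hss (fun b hb => ?_)
        simp only [Finset.mem_sdiff, Finset.mem_insert, Finset.mem_singleton, not_or] at hb ⊢
        obtain ⟨hbs, hba, hbfa⟩ := hb
        obtain ⟨hfb, hffb, hfbne⟩ := h b hbs
        refine ⟨⟨hfb, ?_, ?_⟩, hffb, hfbne⟩
        · intro hfb_eq
          exact hbfa (by rw [← hfb_eq, hffb])
        · intro hfb_eq
          exact hba (by rw [← hffa, ← hfb_eq, hffb])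
      have hcard2 : ({a, f a} : Finset α).card = 2 := by
        rw [Finset.card_insert_of_notMem (by simp [Ne.symm hne])]
        simp
      have := Finset.card_sdiff_add_card_eq_card hsubset
      obtain ⟨k, hk⟩ := heven
      exact ⟨k + 1, by omega⟩

/-- Any fusion of two nicely coloured cographs is a nicely coloured cograph. -/
theorem fusion_nice_cograph {V₁ V₂ : Type} [Fintype V₁] [Fintype V₂]
    (G₁ : SimpleGraph V₁) (G₂ : SimpleGraph V₂)
    (sim₁ : V₁ → V₁ → Prop) (sim₂ : V₂ → V₂ → Prop)
    (hc₁ : IsCograph G₁) (hn₁ : IsNiceColouring G₁ sim₁)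
    (hc₂ : IsCograph G₂) (hn₂ : IsNiceColouring G₂ sim₂)
    (A : Set V₁) (B : Set V₂)
    (hA : IsPortionOn G₁ Set.univ A) (hB : IsPortionOn G₂ Set.univ B) :
    IsCograph (fusion G₁ G₂ A B) ∧
    IsNiceColouring (fusion G₁ G₂ A B) (simSum sim₁ sim₂) := by
  classical
  obtain ⟨⟨hE₁, hC₁⟩, hT₁, hm₁⟩ := hn₁
  obtain ⟨⟨hE₂, hC₂⟩, hT₂, hm₂⟩ := hn₂
  constructor
  · -- cograph
    refine ⟨⟨Sum.inl (Classical.choice hc₁.1)⟩, ?_⟩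
    rintro (v|v) (w|w) (x|x) (y|y) hvw hvx hvy hwx hwy hxy ⟨e1, e2, e3, n1, n2, n3⟩
    -- LLLL
    · exact hc₁.2 v w x y (fun h => hvw (congrArg _ h)) (fun h => hvx (congrArg _ h))
        (fun h => hvy (congrArg _ h)) (fun h => hwx (congrArg _ h))
        (fun h => hwy (congrArg _ h)) (fun h => hxy (congrArg _ h))
        ⟨e1, e2, e3, n1, n2, n3⟩
    -- LLLR
    · exact hA.2 x e3.1 w (Set.mem_univ w) (fun hw => n2 ⟨hw, e3.2⟩) e2.symm
    -- LLRL
    · exact hA.2 w e2.1 v (Set.mem_univ v) (fun hv => n1 ⟨hv, e2.2⟩) e1.symm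
    -- LLRR
    · exact hB.2 x e2.2 y (Set.mem_univ y) (fun hy => n2 ⟨e2.1, hy⟩) e3
    -- LRLL
    · exact hA.2 x e2.1 y (Set.mem_univ y) (fun hy => n2 ⟨hy, e2.2⟩) e3
    -- LRLR
    · exact n3 ⟨e1.1, e3.2⟩
    -- LRRL
    · exact n1 ⟨e1.1, e3.2⟩
    -- LRRR
    · exact hB.2 w e1.2 x (Set.mem_univ x) (fun hx => n1 ⟨e1.1, hx⟩) e2
    -- RLLL
    · exact hA.2 w e1.1 x (Set.mem_univ x) (fun hx => n1 ⟨hx, e1.2⟩) e2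
    -- RLLR
    · exact n2 ⟨e1.1, e3.2⟩
    -- RLRL
    · exact n3 ⟨e3.1, e1.2⟩
    -- RLRR
    · exact hB.2 x e2.2 y (Set.mem_univ y) (fun hy => n2 ⟨e2.1, hy⟩) e3
    -- RRLL
    · exact hB.2 w e2.2 v (Set.mem_univ v) (fun hv => n1 ⟨e2.1, hv⟩) e1.symm
    -- RRLR
    · exact hB.2 w e2.2 v (Set.mem_univ v) (fun hv => n1 ⟨e2.1, hv⟩) e1.symm
    -- RRRL
    · exact hB.2 x e3.2 w (Set.mem_univ w) (fun hw => n2 ⟨e3.1, hw⟩) e2.symm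
    -- RRRR
    · exact hc₂.2 v w x y (fun h => hvw (congrArg _ h)) (fun h => hvx (congrArg _ h))
        (fun h => hvy (congrArg _ h)) (fun h => hwx (congrArg _ h))
        (fun h => hwy (congrArg _ h)) (fun h => hxy (congrArg _ h))
        ⟨e1, e2, e3, n1, n2, n3⟩
  constructor
  · -- colouring
    constructor
    · constructor
      · rintro (v|v)
        · exact hE₁.refl v
        · exact hE₂.refl v
      · rintro (v|v) (w|w) h
        · exact hE₁.symm h
        · exact h.elim
        · exact h.elim
        · exact hE₂.symm h
      · rintro (v|v) (w|w) (x|x) h h'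
        · exact hE₁.trans h h'
        · exact h'.elim
        · exact h.elim
        · exact h.elim
        · exact h.elim
        · exact h.elim
        · exact h'.elim
        · exact hE₂.trans h h'
    · rintro (v|v) (w|w) h hadj
      · exact hC₁ v w h hadj
      · exact h.elim
      · exact h.elim
      · exact hC₂ v w h hadj
  constructor
  · -- classes of size ≤ 2
    rintro (v|v) (a|a) ha (b|b) hb (c|c) hc
    all_goals first
      | exact ha.elim | exact hb.elim | exact hc.elim
      | (rcases hT₁ v a ha b hb c hc with h|h|h
         · exact Or.inl (congrArg _ h)
         · exact Or.inr (Or.inl (congrArg _ h))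
         · exact Or.inr (Or.inr (congrArg _ h)))
      | (rcases hT₂ v a ha b hb c hc with h|h|h
         · exact Or.inl (congrArg _ h)
         · exact Or.inr (Or.inl (congrArg _ h))
         · exact Or.inr (Or.inr (congrArg _ h)))
  · -- matching condition
    intro W hW hmat
    obtain ⟨hWne, hM⟩ := hmat
    set F := fusion G₁ G₂ A B with hF
    set W₁ : Set V₁ := {v | Sum.inl v ∈ W} with hW₁
    set W₂ : Set V₂ := {v | Sum.inr v ∈ W} with hW₂
    have hclassL : ∀ v, Sum.inl v ∈ W →
        (∀ u, sim₁ v u → u ∈ W₁) ∧ ∃ w, w ≠ v ∧ sim₁ v w := by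
      intro v hv
      obtain ⟨hcl, w, hwne, hsim⟩ := hW (Sum.inl v) hv
      constructor
      · intro u hu
        exact hcl (show simSum sim₁ sim₂ (Sum.inl v) (Sum.inl u) from hu)
      · rcases w with w | w
        · exact ⟨w, fun h => hwne (congrArg _ h), hsim⟩
        · exact hsim.elim
    have hclassR : ∀ v, Sum.inr v ∈ W →
        (∀ u, sim₂ v u → u ∈ W₂) ∧ ∃ w, w ≠ v ∧ sim₂ v w := by
      intro v hv
      obtain ⟨hcl, w, hwne, hsim⟩ := hW (Sum.inr v) hv
      constructor
      · intro u hu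
        exact hcl (show simSum sim₁ sim₂ (Sum.inr v) (Sum.inr u) from hu)
      · rcases w with w | w
        · exact hsim.elim
        · exact ⟨w, fun h => hwne (congrArg _ h), hsim⟩
    have hunique : ∀ z ∈ W, ∀ p : V₁ ⊕ V₂, p ∈ W → F.Adj z p → ∀ q : V₁ ⊕ V₂, q ∈ W →
        F.Adj z q → p = q := by
      intro z hz p hp hap q hq haq
      obtain ⟨r, _, hr⟩ := hM z hz
      rw [hr p ⟨hp, hap⟩, hr q ⟨hq, haq⟩]
    by_cases hcross : (∃ a ∈ W₁, a ∈ A) ∧ (∃ b ∈ W₂, b ∈ B)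
    · -- cross case: parity contradiction on W₂
      obtain ⟨⟨a, haW, haA⟩, b, hbW, hbB⟩ := hcross
      have hab : F.Adj (Sum.inl a) (Sum.inr b) := ⟨haA, hbB⟩
      have hBsing : ∀ y ∈ W₂, y ∈ B → y = b := by
        intro y hy hyB
        have := hunique (Sum.inl a) haW (Sum.inr y) hy ⟨haA, hyB⟩ (Sum.inr b) hbW hab
        exact Sum.inr.inj this
      have hb_nonbr : ∀ y ∈ W₂, ¬ G₂.Adj b y := by
        intro y hy hadj
        have := hunique (Sum.inr b) hbW (Sum.inr y) hy hadj (Sum.inl a) haW hab.symm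
        simp at this
      -- the two pairings on W₂
      have hpart : ∀ v ∈ W₂, ∃ w, sim₂ v w ∧ w ≠ v ∧ w ∈ W₂ := by
        intro v hv
        obtain ⟨hcl, w, hwne, hsim⟩ := hclassR v hv
        exact ⟨w, hsim, hwne, hcl w hsim⟩
      have huniqpart : ∀ v w w', sim₂ v w → w ≠ v → sim₂ v w' → w' ≠ v → w = w' := by
        intro v w w' h1 h2 h3 h4
        rcases hT₂ v w h1 w' h3 v (hE₂.refl v) with h|h|h
        · exact h
        · exact absurd h h2
        · exact absurd h h4
      have hmatch : ∀ v ∈ W₂, v ≠ b → ∃ w, w ∈ W₂ ∧ G₂.Adj v w ∧ w ≠ b := by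
        intro v hv hvb
        obtain ⟨p, ⟨hpW, hpA⟩, _⟩ := hM (Sum.inr v) hv
        rcases p with u | w
        · exact absurd (hBsing v hv hpA.2) hvb
        · refine ⟨w, hpW, hpA, ?_⟩
          rintro rfl
          exact hb_nonbr v hv hpA.symm
      have huniqmatch : ∀ v ∈ W₂, ∀ w w', w ∈ W₂ → G₂.Adj v w → w' ∈ W₂ → G₂.Adj v w' →
          w = w' := by
        intro v hv w w' h1 h2 h3 h4
        exact Sum.inr.inj (hunique (Sum.inr v) hv (Sum.inr w) h1 h2 (Sum.inr w') h3 h4)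
      set S : Finset V₂ := (Set.toFinite W₂).toFinset with hS
      have hmemS : ∀ v, v ∈ S ↔ v ∈ W₂ := fun v => Set.Finite.mem_toFinset _
      have hbS : b ∈ S := (hmemS b).2 hbW
      -- class-partner pairing : Even S.card
      have hevenS : Even S.card := by
        set f : V₂ → V₂ := fun v =>
          if h : ∃ w, sim₂ v w ∧ w ≠ v ∧ w ∈ W₂ then h.choose else v with hf
        refine even_card_of_pairing S f (fun v hv => ?_)
        have hvW : v ∈ W₂ := (hmemS v).1 hv
        have hex : ∃ w, sim₂ v w ∧ w ≠ v ∧ w ∈ W₂ := hpart v hvW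
        have hfv : f v = hex.choose := dif_pos hex
        obtain ⟨hs1, hs2, hs3⟩ := hex.choose_spec
        have hex2 : ∃ w, sim₂ (f v) w ∧ w ≠ f v ∧ w ∈ W₂ := by
          rw [hfv]
          exact ⟨v, hE₂.symm hs1, fun h => hs2 h.symm, hvW⟩
        have hffv : f (f v) = hex2.choose := dif_pos hex2
        obtain ⟨ht1, ht2, ht3⟩ := hex2.choose_spec
        refine ⟨(hmemS _).2 (hfv ▸ hs3), ?_, by rw [hfv]; exact hs2⟩
        rw [hffv]
        refine huniqpart (f v) _ v ht1 ht2 (by rw [hfv]; exact hE₂.symm hs1) ?_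
        rw [hfv]; exact fun h => hs2 h.symm
      -- matching pairing on S.erase b : Even (S.erase b).card
      have hevenS' : Even (S.erase b).card := by
        set g : V₂ → V₂ := fun v =>
          if h : ∃ w, w ∈ W₂ ∧ G₂.Adj v w ∧ w ≠ b then h.choose else v with hg
        refine even_card_of_pairing _ g (fun v hv => ?_)
        rw [Finset.mem_erase] at hv
        obtain ⟨hvb, hvS⟩ := hv
        have hvW : v ∈ W₂ := (hmemS v).1 hvS
        have hex : ∃ w, w ∈ W₂ ∧ G₂.Adj v w ∧ w ≠ b := hmatch v hvW hvb
        have hgv : g v = hex.choose := dif_pos hex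
        obtain ⟨hs1, hs2, hs3⟩ := hex.choose_spec
        have hex2 : ∃ w, w ∈ W₂ ∧ G₂.Adj (g v) w ∧ w ≠ b := by
          rw [hgv]
          exact ⟨v, hvW, hs2.symm, hvb⟩
        have hggv : g (g v) = hex2.choose := dif_pos hex2
        obtain ⟨ht1, ht2, ht3⟩ := hex2.choose_spec
        refine ⟨?_, ?_, ?_⟩
        · rw [Finset.mem_erase]
          exact ⟨by rw [hgv]; exact hs3, (hmemS _).2 (hgv ▸ hs1)⟩
        · rw [hggv]
          refine huniqmatch (g v) (hgv ▸ hs1) _ v ht1 ht2 hvW ?_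
          rw [hgv]; exact hs2.symm
        · rw [hgv]; exact hs2.ne'
      obtain ⟨k, hk⟩ := hevenS
      obtain ⟨m, hm⟩ := hevenS'
      have := Finset.card_erase_add_one hbS
      omega
    · -- no cross edges
      have hnc : ∀ x ∈ W₁, ∀ y ∈ W₂, ¬ F.Adj (Sum.inl x) (Sum.inr y) := by
        intro x hx y hy hadj
        exact hcross ⟨⟨x, hx, hadj.1⟩, ⟨y, hy, hadj.2⟩⟩
      obtain ⟨z, hz⟩ := hWne
      rcases z with v | v
      · refine hm₁ W₁ (fun u hu => ⟨fun w hw => (hclassL u hu).1 w hw, (hclassL u hu).2⟩)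
          ⟨⟨v, hz⟩, ?_⟩
        intro u hu
        obtain ⟨p, ⟨hpW, hpA⟩, hpu⟩ := hM (Sum.inl u) hu
        rcases p with w | w
        · refine ⟨w, ⟨hpW, hpA⟩, ?_⟩
          intro y ⟨hyW, hyA⟩
          exact Sum.inl.inj (hpu (Sum.inl y) ⟨hyW, hyA⟩)
        · exact absurd hpA (hnc u hu w hpW)
      · refine hm₂ W₂ (fun u hu => ⟨fun w hw => (hclassR u hu).1 w hw, (hclassR u hu).2⟩)
          ⟨⟨v, hz⟩, ?_⟩
        intro u hu
        obtain ⟨p, ⟨hpW, hpA⟩, hpu⟩ := hM (Sum.inr u) hu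
        rcases p with w | w
        · exact absurd ⟨hpA.1, hpA.2⟩ (hnc w hpW u hu)
        · refine ⟨w, ⟨hpW, hpA⟩, ?_⟩
          intro y ⟨hyW, hyA⟩
          exact Sum.inr.inj (hpu (Sum.inr y) ⟨hyW, hyA⟩)


end CombinatorialProofs
end
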